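/- arXiv:1909.05633 — 5 statements merged into one kernel-verified Lean document; each statement's English description precedes it below -/
import Mathlib

section
/- For every real β ≥ 1, the function δ(x) = x(1 + x)^β / ((1 + x)^β − (1 − x)^β) is monotonically increasing on the interval (0, 1]; in particular δ(x) ≤ δ(1) = 1 for all x ∈ (0, 1]. -/
open Real Set

/-- Key pointwise inequality for the derivative numerator. -/
lemma key_ineq (β x : ℝ) (hβ : 1 ≤ β) (hx0 : 0 < x) (hx1 : x < 1) :
    (1 - x) ^ (β - 1) * (1 - x ^ 2 + 2 * β * x) ≤ (1 + x) ^ (β - 1) * (1 + x) ^ 2 := by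
  set a := (1 + x) ^ (β - 1) with ha
  set b := (1 - x) ^ (β - 1) with hb
  have h1x : (0:ℝ) < 1 - x := by linarith
  have h1x' : (0:ℝ) < 1 + x := by linarith
  have hbpos : 0 < b := rpow_pos_of_pos h1x _
  have hapos : 0 < a := rpow_pos_of_pos h1x' _
  -- Bernoulli: (1 + s)^β ≥ 1 + β s with s = 2x/(1-x)
  have hs : (-1:ℝ) ≤ 2 * x / (1 - x) := by
    have : (0:ℝ) ≤ 2 * x / (1 - x) := by positivity
    linarith
  have hbern := one_add_mul_self_le_rpow_one_add hs hβ
  have hsum : 1 + 2 * x / (1 - x) = (1 + x) / (1 - x) := by field_simp; ring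
  rw [hsum, Real.div_rpow h1x'.le h1x.le] at hbern
  have hPa : (1 + x) ^ β = a * (1 + x) := by
    rw [ha, ← Real.rpow_add_one (ne_of_gt h1x') (β - 1), sub_add_cancel]
  have hQb : (1 - x) ^ β = b * (1 - x) := by
    rw [hb, ← Real.rpow_add_one (ne_of_gt h1x) (β - 1), sub_add_cancel]
  rw [hPa, hQb] at hbern
  -- clear denominators in hbern to get: b*(1-x) + 2*β*b*x ≤ a*(1+x)
  have hK : b * (1 - x) + 2 * β * b * x ≤ a * (1 + x) := by
    have h' := mul_le_mul_of_nonneg_right hbern (le_of_lt (mul_pos hbpos h1x))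
    calc b * (1 - x) + 2 * β * b * x
        = (1 + β * (2 * x / (1 - x))) * (b * (1 - x)) := by field_simp
      _ ≤ a * (1 + x) / (b * (1 - x)) * (b * (1 - x)) := h'
      _ = a * (1 + x) := by field_simp
  nlinarith [mul_le_mul_of_nonneg_right hK h1x'.le,
    mul_nonneg (mul_nonneg hbpos.le (sq_nonneg x)) (by linarith : (0:ℝ) ≤ β)]

/-- For `β ≥ 1`, `δ(x) = x(1+x)^β / ((1+x)^β - (1-x)^β)` is monotonically
increasing on `(0, 1]`; in particular `δ(x) ≤ δ(1) = 1` for all `x ∈ (0, 1]`. -/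
theorem stmt4 (β : ℝ) (hβ : 1 ≤ β) :
    MonotoneOn (fun x : ℝ => x * (1 + x) ^ β / ((1 + x) ^ β - (1 - x) ^ β))
      (Set.Ioc (0:ℝ) 1) ∧
    (fun x : ℝ => x * (1 + x) ^ β / ((1 + x) ^ β - (1 - x) ^ β)) 1 = 1 ∧
    ∀ x ∈ Set.Ioc (0:ℝ) 1,
      x * (1 + x) ^ β / ((1 + x) ^ β - (1 - x) ^ β) ≤ 1 := by
  set f : ℝ → ℝ := fun x => x * (1 + x) ^ β / ((1 + x) ^ β - (1 - x) ^ β) with hf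
  have hβ0 : (0:ℝ) < β := by linarith
  -- denominator is positive on (0,1]
  have hden : ∀ x : ℝ, 0 < x → x ≤ 1 → 0 < (1 + x) ^ β - (1 - x) ^ β := by
    intro x hx0 hx1
    have : (1 - x) ^ β < (1 + x) ^ β :=
      Real.rpow_lt_rpow (by linarith) (by linarith) hβ0
    linarith
  -- derivative formula on (0,1]
  have hderiv : ∀ x : ℝ, 0 < x → x ≤ 1 →
      HasDerivAt f
        (((1 * (1 + x) ^ β + x * (1 * β * (1 + x) ^ (β - 1))) *
            ((1 + x) ^ β - (1 - x) ^ β) -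
          x * (1 + x) ^ β * (1 * β * (1 + x) ^ (β - 1) - -1 * β * (1 - x) ^ (β - 1))) /
          ((1 + x) ^ β - (1 - x) ^ β) ^ 2) x := by
    intro x hx0 hx1
    have h1 : HasDerivAt (fun x : ℝ => 1 + x) 1 x := by
      simpa using (hasDerivAt_id x).const_add 1
    have h2 : HasDerivAt (fun x : ℝ => 1 - x) (-1) x := by
      simpa using (hasDerivAt_id x).const_sub 1
    have hP : HasDerivAt (fun x : ℝ => (1 + x) ^ β) (1 * β * (1 + x) ^ (β - 1)) x :=
      h1.rpow_const (Or.inr hβ)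
    have hQ : HasDerivAt (fun x : ℝ => (1 - x) ^ β) (-1 * β * (1 - x) ^ (β - 1)) x :=
      h2.rpow_const (Or.inr hβ)
    have hN : HasDerivAt (fun x : ℝ => x * (1 + x) ^ β)
        (1 * (1 + x) ^ β + x * (1 * β * (1 + x) ^ (β - 1))) x :=
      (hasDerivAt_id x).mul hP
    exact hN.div (hP.sub hQ) (ne_of_gt (hden x hx0 hx1))
  -- the derivative is nonnegative on the interior
  have hnonneg : ∀ x ∈ interior (Set.Ioc (0:ℝ) 1), 0 ≤ deriv f x := by
    intro x hx
    rw [interior_Ioc] at hx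
    obtain ⟨hx0, hx1⟩ := hx
    rw [(hderiv x hx0 hx1.le).deriv]
    apply div_nonneg _ (sq_nonneg _)
    have h1x : (0:ℝ) < 1 - x := by linarith
    have h1x' : (0:ℝ) < 1 + x := by linarith
    set a := (1 + x) ^ (β - 1) with ha
    set b := (1 - x) ^ (β - 1) with hb
    have hapos : 0 < a := rpow_pos_of_pos h1x' _
    have hPa : (1 + x) ^ β = a * (1 + x) := by
      rw [ha, ← Real.rpow_add_one (ne_of_gt h1x') (β - 1), sub_add_cancel]
    have hQb : (1 - x) ^ β = b * (1 - x) := by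
      rw [hb, ← Real.rpow_add_one (ne_of_gt h1x) (β - 1), sub_add_cancel]
    rw [hPa, hQb]
    have hkey := key_ineq β x hβ hx0 hx1
    rw [← ha, ← hb] at hkey
    nlinarith [mul_le_mul_of_nonneg_left hkey hapos.le]
  have hmono : MonotoneOn f (Set.Ioc (0:ℝ) 1) := by
    apply monotoneOn_of_deriv_nonneg (convex_Ioc 0 1)
    · intro x hx
      exact (hderiv x hx.1 hx.2).continuousAt.continuousWithinAt
    · intro x hx
      rw [interior_Ioc] at hx
      exact (hderiv x hx.1 hx.2.le).differentiableAt.differentiableWithinAt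
    · exact hnonneg
  have hone : f 1 = 1 := by
    have h2 : (0:ℝ) < (2:ℝ) ^ β := rpow_pos_of_pos two_pos β
    simp only [hf]
    norm_num
    rw [Real.zero_rpow (ne_of_gt hβ0)]
    rw [sub_zero, div_self (ne_of_gt h2)]
  refine ⟨hmono, hone, fun x hx => ?_⟩
  have := hmono hx (by constructor <;> norm_num) hx.2
  rwa [hone] at this
end

section
/- Let f = h + conj(g) be a sense-preserving harmonic mapping on 𝔻 with dilatation ω, and suppose f is the horizontal shear of φ, where φ is holomorphic, injective and convex on 𝔻 with φ(0) = 0, φ'(0) = 1. Let α be real with 0 ≤ α ≤ √2/2, let λ ∈ ℂ with |λ| ≤ 1, and set Φ_λ = H + λG. Then for every 0 < r < 1 and all θ₁ ≤ θ₂ with θ₂ − θ₁ ≤ 2π, ∫_{θ₁}^{θ₂} Re{1 + r e^{iθ} Φ_λ''(r e^{iθ})/Φ_λ'(r e^{iθ})} dθ > −π (Kaplan's criterion, so each Φ_λ is close-to-convex and F_α is stable harmonic close-to-convex). -/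
open Set Metric Complex

private lemma hasStrictDerivAt_of_diffOn' {f : ℂ → ℂ} {s : Set ℂ} (hs : IsOpen s)
    (hf : DifferentiableOn ℂ f s) {z : ℂ} (hz : z ∈ s) :
    HasStrictDerivAt f (deriv f z) z := by
  obtain ⟨p, hp⟩ := hf.analyticAt (hs.mem_nhds hz)
  have h1 := hp.hasStrictDerivAt
  rwa [h1.hasDerivAt.deriv]

private lemma aux_small' {u : ℂ} (hu : ‖u‖ < Real.sqrt 2 / 2) :
    (1 + u) ∈ Complex.slitPlane ∧ |(Complex.log (1 + u)).im| < Real.pi / 4 ∧ (1 + u) ≠ 0 := by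
  set x : ℂ := 1 + u with hx
  have hs2 : (Real.sqrt 2 / 2) ^ 2 = 1 / 2 := by
    rw [div_pow, Real.sq_sqrt (by norm_num : (0:ℝ) ≤ 2)]; norm_num
  have habs : ‖u‖ ^ 2 < 1 / 2 := by
    have h0 := norm_nonneg u
    nlinarith
  have hns : (x.re - 1) ^ 2 + x.im ^ 2 < 1 / 2 := by
    have : Complex.normSq u = (x.re - 1) ^ 2 + x.im ^ 2 := by
      simp [Complex.normSq_apply, hx]; ring
    rw [← this, ← Complex.sq_norm]; exact habs
  have hre : 0 < x.re := by nlinarith [sq_nonneg x.im, sq_nonneg (x.re - 1)]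
  have him : |x.im| < x.re := by
    rw [abs_lt]
    constructor <;>
      nlinarith [sq_nonneg (x.re - 1/2), sq_nonneg (x.im + x.re), sq_nonneg (x.im - x.re)]
  have hx0 : x ≠ 0 := fun h => by rw [h] at hre; simp at hre
  refine ⟨Complex.mem_slitPlane_iff.2 (Or.inl hre), ?_, hx0⟩
  rw [Complex.log_im, Complex.arg_of_re_nonneg hre.le]
  have hxabs : 0 < ‖x‖ := norm_pos_iff.mpr hx0
  set t : ℝ := x.im / ‖x‖ with ht
  have hax : ‖x‖ ^ 2 = x.re ^ 2 + x.im ^ 2 := by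
    rw [Complex.sq_norm, Complex.normSq_apply]; ring
  have ht2 : t ^ 2 < 1 / 2 := by
    rw [div_pow, div_lt_iff₀ (pow_pos hxabs 2)]
    nlinarith [_root_.sq_abs x.im, abs_nonneg x.im]
  have htabs : |t| < Real.sqrt 2 / 2 := by
    nlinarith [_root_.sq_abs t, abs_nonneg t, Real.sqrt_nonneg 2, hs2]
  have h1 : |Real.arcsin t| = Real.arcsin |t| := by
    rcases le_or_gt 0 t with hsg | hsg
    · rw [_root_.abs_of_nonneg hsg, _root_.abs_of_nonneg (Real.arcsin_nonneg.2 hsg)]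
    · rw [_root_.abs_of_neg hsg, _root_.abs_of_neg (Real.arcsin_lt_zero.2 hsg), Real.arcsin_neg]
  have hsq2le : Real.sqrt 2 / 2 ≤ 1 := by
    nlinarith [Real.sqrt_nonneg 2, Real.sq_sqrt (by norm_num : (0:ℝ) ≤ 2)]
  have h2 : Real.arcsin |t| < Real.arcsin (Real.sqrt 2 / 2) := by
    apply Real.strictMonoOn_arcsin
    · exact ⟨by linarith [abs_nonneg t], by linarith⟩
    · exact ⟨by linarith [Real.sqrt_nonneg 2], hsq2le⟩
    · exact htabs
  have h3 : Real.arcsin (Real.sqrt 2 / 2) = Real.pi / 4 := by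
    rw [← Real.sin_pi_div_four]
    exact Real.arcsin_sin (by linarith [Real.pi_pos]) (by linarith [Real.pi_pos])
  rw [h1]
  linarith [h3 ▸ h2]

private lemma starlike' {φ : ℂ → ℂ}
    (hφd : DifferentiableOn ℂ φ (Metric.ball 0 1))
    (hφinj : Set.InjOn φ (Metric.ball 0 1))
    (hφ0 : φ 0 = 0)
    (hconv : Convex ℝ (φ '' Metric.ball 0 1))
    (hφ' : ∀ z ∈ Metric.ball (0:ℂ) 1, deriv φ z ≠ 0)
    (hφnz : ∀ z ∈ Metric.ball (0:ℂ) 1, z ≠ 0 → φ z ≠ 0) :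
    ∀ z ∈ Metric.ball (0:ℂ) 1, z ≠ 0 → 0 ≤ (z * deriv φ z / φ z).re := by
  set D : Set ℂ := Metric.ball 0 1 with hD
  set K : Set ℂ := φ '' D with hK
  set ι : ℂ → ℂ := Function.invFunOn φ D with hι
  have h0D : (0:ℂ) ∈ D := Metric.mem_ball_self one_pos
  have hleft : ∀ z ∈ D, ι (φ z) = z := fun z hz => hφinj.leftInvOn_invFunOn hz
  have hιmem : ∀ w ∈ K, ι w ∈ D := by
    rintro w ⟨a, ha, rfl⟩; exact Function.invFunOn_mem ⟨a, ha, rfl⟩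
  have hφι : ∀ w ∈ K, φ (ι w) = w := by
    rintro w ⟨a, ha, rfl⟩; exact Function.invFunOn_eq ⟨a, ha, rfl⟩
  have hstrict : ∀ w ∈ K, HasStrictDerivAt ι (deriv φ (ι w))⁻¹ w := by
    intro w hw
    have hzD := hιmem w hw
    have hev : ∀ᶠ x in nhds (ι w), ι (φ x) = x :=
      Filter.eventually_of_mem (Metric.isOpen_ball.mem_nhds hzD) (fun x hx => hleft x hx)
    have := (hasStrictDerivAt_of_diffOn' Metric.isOpen_ball hφd hzD).to_local_left_inverse
      (hφ' _ hzD) hev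
    rwa [hφι w hw] at this
  intro z hzD hz0
  have hφzK : φ z ∈ K := mem_image_of_mem _ hzD
  have h0K : (0:ℂ) ∈ K := ⟨0, h0D, hφ0⟩
  have hKmem : ∀ t : ℝ, 0 ≤ t → t ≤ 1 → ∀ ζ ∈ D, ((t:ℂ) * φ ζ) ∈ K := by
    intro t ht0 ht1 ζ hζ
    have := hconv h0K (mem_image_of_mem _ hζ) (by linarith : (0:ℝ) ≤ 1 - t) ht0 (by ring)
    simpa [Complex.real_smul] using this
  have hschwarz : ∀ t : ℝ, 0 ≤ t → t ≤ 1 →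
      ‖ι ((t:ℂ) * φ z)‖ ≤ ‖z‖ := by
    intro t ht0 ht1
    have hdiff : DifferentiableOn ℂ (fun ζ => ι ((t:ℂ) * φ ζ)) D := by
      intro ζ hζ
      have h1 : DifferentiableAt ℂ (fun ζ => (t:ℂ) * φ ζ) ζ :=
        (hφd.differentiableAt (Metric.isOpen_ball.mem_nhds hζ)).const_mul _
      exact (((hstrict _ (hKmem t ht0 ht1 ζ hζ)).hasDerivAt.differentiableAt).comp ζ
        h1).differentiableWithinAt
    have hmaps : Set.MapsTo (fun ζ => ι ((t:ℂ) * φ ζ)) D D :=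
      fun ζ hζ => hιmem _ (hKmem t ht0 ht1 ζ hζ)
    have h00 : (fun ζ => ι ((t:ℂ) * φ ζ)) 0 = 0 := by
      simp only [hφ0, mul_zero]
      conv_lhs => rw [← hφ0]
      exact hleft 0 h0D
    exact Complex.norm_le_norm_of_mapsTo_ball_self hdiff (hmaps.mono_right ball_subset_closedBall) h00 (mem_ball_zero_iff.1 hzD)
  set d : ℂ := (deriv φ z)⁻¹ * φ z with hd
  set γ : ℝ → ℂ := fun t => ι ((t:ℂ) * φ z) with hγdef
  have hγ1 : γ 1 = z := by
    show ι ((1:ℂ) * φ z) = z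
    rw [one_mul]; exact hleft z hzD
  have hγ : HasDerivAt γ d 1 := by
    have inner : HasDerivAt (fun w : ℂ => w * φ z) (φ z) ((1:ℝ):ℂ) := by
      simpa using (hasDerivAt_id ((1:ℝ):ℂ)).mul_const (φ z)
    have h2 : HasDerivAt ι (deriv φ z)⁻¹ (((1:ℝ):ℂ) * φ z) := by
      rw [(by push_cast; rw [one_mul] : ((1:ℝ):ℂ) * φ z = φ z)]
      have := (hstrict (φ z) hφzK).hasDerivAt
      rwa [hleft z hzD] at this
    have hcomp := h2.comp (((1:ℝ):ℂ)) inner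
    exact hcomp.comp_ofReal
  have hre : HasDerivAt (fun t => (γ t).re) d.re 1 := by
    simpa [Function.comp_def] using Complex.reCLM.hasFDerivAt.comp_hasDerivAt 1 hγ
  have him : HasDerivAt (fun t => (γ t).im) d.im 1 := by
    simpa [Function.comp_def] using Complex.imCLM.hasFDerivAt.comp_hasDerivAt 1 hγ
  set u : ℝ → ℝ := fun t => (γ t).re ^ 2 + (γ t).im ^ 2 with hu
  have huderiv : HasDerivAt u
      (2 * (γ 1).re ^ 1 * d.re + 2 * (γ 1).im ^ 1 * d.im) 1 := (hre.pow 2).add (him.pow 2)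
  have hval : ∀ s : ℝ, u s = ‖γ s‖ ^ 2 := by
    intro s; rw [Complex.sq_norm, Complex.normSq_apply]; ring
  have hmono : ∀ t : ℝ, t ∈ Ioo (0:ℝ) 1 → u t ≤ u 1 := by
    intro t ht
    rw [hval, hval, hγ1]
    exact pow_le_pow_left₀ (norm_nonneg _) (hschwarz t ht.1.le ht.2.le) 2
  set c : ℝ := 2 * (γ 1).re ^ 1 * d.re + 2 * (γ 1).im ^ 1 * d.im with hc
  have hcnonneg : 0 ≤ c := by
    have hWithin : HasDerivWithinAt u c (Iio (1:ℝ)) 1 := huderiv.hasDerivWithinAt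
    rw [hasDerivWithinAt_iff_tendsto_slope] at hWithin
    have hset : Iio (1:ℝ) \ {1} = Iio 1 := diff_singleton_eq_self (by simp)
    rw [hset] at hWithin
    refine ge_of_tendsto hWithin ?_
    filter_upwards [Ioo_mem_nhdsLT_of_mem (⟨zero_lt_one, le_refl (1:ℝ)⟩ : (1:ℝ) ∈ Ioc (0:ℝ) 1)]
      with t ht
    rw [slope_def_field]
    have h1 : u t - u 1 ≤ 0 := sub_nonpos.2 (hmono t ht)
    have h2 : t - 1 < 0 := sub_neg.2 ht.2
    exact div_nonneg_iff.2 (Or.inr ⟨h1, h2.le⟩)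
  have hstar : 0 ≤ ((starRingEnd ℂ) z * d).re := by
    have heq : ((starRingEnd ℂ) z * d).re = z.re * d.re + z.im * d.im := by
      rw [Complex.mul_re, Complex.conj_re, Complex.conj_im]; ring
    rw [heq]
    rw [hγ1] at hc
    simp only [pow_one] at hc
    linarith [hcnonneg]
  set A : ℂ := z * deriv φ z / φ z with hA
  have hφz0 : φ z ≠ 0 := hφnz z hzD hz0
  have hφ'0 : deriv φ z ≠ 0 := hφ' z hzD
  have hA0 : A ≠ 0 := div_ne_zero (mul_ne_zero hz0 hφ'0) hφz0
  have key : (starRingEnd ℂ) z * d = ((Complex.normSq z : ℝ):ℂ) * A⁻¹ := by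
    rw [← Complex.mul_conj]
    rw [hA, hd]
    field_simp
  rw [key, Complex.re_ofReal_mul, Complex.inv_re] at hstar
  have hnsz : 0 < Complex.normSq z := Complex.normSq_pos.2 hz0
  have hnsA : 0 < Complex.normSq A := Complex.normSq_pos.2 hA0
  by_contra hneg
  push_neg at hneg
  have : Complex.normSq z * (A.re / Complex.normSq A) < 0 :=
    mul_neg_of_pos_of_neg hnsz (div_neg_of_neg_of_pos hneg hnsA)
  linarith
/-- `f = h + conj g` the horizontal shear of a normalized convex univalent
`φ`, `0 ≤ α ≤ √2/2`, `|λ| ≤ 1`, `Φ_λ = H + λG`. Then Kaplan's criterion holds: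
for every `0 < r < 1` and `θ₁ ≤ θ₂` with `θ₂ - θ₁ ≤ 2π`,
`∫_{θ₁}^{θ₂} Re{1 + re^{iθ}Φ_λ''(re^{iθ})/Φ_λ'(re^{iθ})} dθ > -π`. -/
theorem stmt7
    (h g ω φ ℓ φα H G : ℂ → ℂ) (α : ℝ) (lam : ℂ)
    (hhd : DifferentiableOn ℂ h (Metric.ball 0 1))
    (hgd : DifferentiableOn ℂ g (Metric.ball 0 1))
    (hωd : DifferentiableOn ℂ ω (Metric.ball 0 1))
    (hh0 : h 0 = 0) (hg0 : g 0 = 0) (hhp0 : deriv h 0 = 1) (hgp0 : deriv g 0 = 0)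
    (hsp : ∀ z ∈ Metric.ball (0:ℂ) 1, ‖deriv g z‖ < ‖deriv h z‖)
    (hdil : ∀ z ∈ Metric.ball (0:ℂ) 1, deriv g z = ω z * deriv h z)
    (hshear : ∀ z ∈ Metric.ball (0:ℂ) 1, h z - g z = φ z)
    (hφd : DifferentiableOn ℂ φ (Metric.ball 0 1))
    (hφinj : Set.InjOn φ (Metric.ball 0 1))
    (hφ0 : φ 0 = 0) (hφp0 : deriv φ 0 = 1)
    -- φ is convex
    (hconv : Convex ℝ ((fun z => φ z) '' Metric.ball 0 1))
    (hℓd : DifferentiableOn ℂ ℓ (Metric.ball 0 1)) (hℓ0 : ℓ 0 = 0)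
    (hℓ : ∀ z ∈ Metric.ball (0:ℂ) 1, φ z = z * Complex.exp (ℓ z))
    (hφα0 : φα 0 = 0)
    (hφα : ∀ z ∈ Metric.ball (0:ℂ) 1, HasDerivAt φα (Complex.exp ((α : ℂ) * ℓ z)) z)
    (hHd : DifferentiableOn ℂ H (Metric.ball 0 1))
    (hGd : DifferentiableOn ℂ G (Metric.ball 0 1))
    (hH0 : H 0 = 0) (hG0 : G 0 = 0)
    (hHG : ∀ z ∈ Metric.ball (0:ℂ) 1, H z - G z = φα z)
    (hGdil : ∀ z ∈ Metric.ball (0:ℂ) 1, deriv G z = (α : ℂ) * ω z * deriv H z)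
    (hα0 : 0 ≤ α) (hα1 : α ≤ Real.sqrt 2 / 2)
    (hlam : ‖lam‖ ≤ 1) :
    ∀ r : ℝ, 0 < r → r < 1 → ∀ θ₁ θ₂ : ℝ, θ₁ ≤ θ₂ → θ₂ - θ₁ ≤ 2 * Real.pi →
      -Real.pi <
        ∫ θ in θ₁..θ₂,
          (1 + ((r : ℂ) * Complex.exp ((θ : ℂ) * Complex.I)) *
              deriv (deriv (fun w => H w + lam * G w))
                ((r : ℂ) * Complex.exp ((θ : ℂ) * Complex.I)) /
              deriv (fun w => H w + lam * G w)
                ((r : ℂ) * Complex.exp ((θ : ℂ) * Complex.I))).re := by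
  intro r hr0 hr1 θ₁ θ₂ hθle hθ2π
  have hDopen : IsOpen (Metric.ball (0:ℂ) 1) := Metric.isOpen_ball
  set D : Set ℂ := Metric.ball (0:ℂ) 1 with hDdef
  -- basic bounds
  have hsqrt2 : Real.sqrt 2 / 2 < 1 := by
    nlinarith [Real.sqrt_nonneg 2, Real.sq_sqrt (by norm_num : (0:ℝ) ≤ 2)]
  have hsqrt2pos : 0 < Real.sqrt 2 / 2 := by positivity
  have hα1' : α < 1 := lt_of_le_of_lt hα1 hsqrt2
  -- h' ≠ 0 and |ω| < 1 on D
  have hh' : ∀ z ∈ D, deriv h z ≠ 0 := by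
    intro z hz habs
    have h1 := hsp z hz
    rw [habs] at h1
    simp only [norm_zero] at h1
    exact absurd h1 (norm_nonneg _).not_gt
  have hω1 : ∀ z ∈ D, ‖ω z‖ < 1 := by
    intro z hz
    have h1 := hsp z hz
    rw [hdil z hz, norm_mul] at h1
    have h2 : 0 < ‖deriv h z‖ := norm_pos_iff.mpr (hh' z hz)
    by_contra hcon
    push_neg at hcon
    nlinarith
  -- φ' ≠ 0 on D
  have hφderiv : ∀ z ∈ D, deriv φ z = deriv h z - deriv g z := by
    intro z hz
    have hev : (fun w => h w - g w) =ᶠ[nhds z] φ :=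
      Filter.eventuallyEq_of_mem (hDopen.mem_nhds hz) (fun w hw => hshear w hw)
    rw [← hev.deriv_eq]
    exact deriv_sub (hhd.differentiableAt (hDopen.mem_nhds hz))
      (hgd.differentiableAt (hDopen.mem_nhds hz))
  have hφ' : ∀ z ∈ D, deriv φ z ≠ 0 := by
    intro z hz hcon
    rw [hφderiv z hz, sub_eq_zero] at hcon
    have := hsp z hz
    rw [hcon] at this
    exact lt_irrefl _ this
  have hφnz : ∀ z ∈ D, z ≠ 0 → φ z ≠ 0 := by
    intro z hz hz0
    rw [hℓ z hz]
    exact mul_ne_zero hz0 (Complex.exp_ne_zero _)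
  have hstar := starlike' hφd hφinj hφ0 hconv hφ' hφnz
  -- deriv φ in terms of ℓ
  have hℓ' : ∀ z ∈ D, HasDerivAt ℓ (deriv ℓ z) z :=
    fun z hz => (hℓd.differentiableAt (hDopen.mem_nhds hz)).hasDerivAt
  have hℓderiv : ∀ z ∈ D, deriv φ z = Complex.exp (ℓ z) * (1 + z * deriv ℓ z) := by
    intro z hz
    have hev : (fun w => w * Complex.exp (ℓ w)) =ᶠ[nhds z] φ :=
      Filter.eventuallyEq_of_mem (hDopen.mem_nhds hz) (fun w hw => (hℓ w hw).symm)
    rw [← hev.deriv_eq]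
    have h1 : HasDerivAt (fun w => w * Complex.exp (ℓ w))
        (1 * Complex.exp (ℓ z) + z * (Complex.exp (ℓ z) * deriv ℓ z)) z :=
      (hasDerivAt_id z).mul ((Complex.hasDerivAt_exp (ℓ z)).comp z (hℓ' z hz))
    rw [h1.deriv]; ring
  -- the crucial bound: Re(z ℓ'(z)) ≥ -1
  have hP : ∀ z ∈ D, -1 ≤ (z * deriv ℓ z).re := by
    intro z hz
    rcases eq_or_ne z 0 with rfl | hz0
    · simp
    · have h1 := hstar z hz hz0
      have h2 : z * deriv φ z / φ z = 1 + z * deriv ℓ z := by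
        rw [hℓderiv z hz, hℓ z hz]
        field_simp [hz0, Complex.exp_ne_zero]
      rw [h2] at h1
      simp only [Complex.add_re, Complex.one_re] at h1
      linarith
  -- smallness of α ω
  have hαω : ∀ z ∈ D, α * ‖ω z‖ < Real.sqrt 2 / 2 := by
    intro z hz
    calc α * ‖ω z‖ ≤ (Real.sqrt 2 / 2) * ‖ω z‖ :=
          mul_le_mul_of_nonneg_right hα1 (norm_nonneg _)
      _ < (Real.sqrt 2 / 2) * 1 :=
          mul_lt_mul_of_pos_left (hω1 z hz) hsqrt2pos
      _ = Real.sqrt 2 / 2 := mul_one _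
  have habs1 : ∀ z ∈ D, ‖lam * (α:ℂ) * ω z‖ < Real.sqrt 2 / 2 := by
    intro z hz
    rw [norm_mul, norm_mul, Complex.norm_real, Real.norm_eq_abs, _root_.abs_of_nonneg hα0]
    calc ‖lam‖ * α * ‖ω z‖ ≤ 1 * α * ‖ω z‖ := by
          apply mul_le_mul_of_nonneg_right (mul_le_mul_of_nonneg_right hlam hα0)
            (norm_nonneg _)
      _ = α * ‖ω z‖ := by ring
      _ < Real.sqrt 2 / 2 := hαω z hz
  have habs2 : ∀ z ∈ D, ‖-((α:ℂ) * ω z)‖ < Real.sqrt 2 / 2 := by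
    intro z hz
    rw [norm_neg, norm_mul, Complex.norm_real, Real.norm_eq_abs, _root_.abs_of_nonneg hα0]
    exact hαω z hz
  -- the two log factors
  have hfac1 := fun z hz => aux_small' (habs1 z hz)
  have hfac2' := fun z hz => aux_small' (habs2 z hz)
  have hsub : ∀ z : ℂ, (1:ℂ) + -((α:ℂ) * ω z) = 1 - (α:ℂ) * ω z := fun z => by ring
  set L : ℂ → ℂ := fun w =>
    Complex.log (1 + lam * (α:ℂ) * ω w) - Complex.log (1 - (α:ℂ) * ω w) with hLdef
  have hfac2 : ∀ z ∈ D, (1 - (α:ℂ) * ω z) ∈ Complex.slitPlane ∧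
      |(Complex.log (1 - (α:ℂ) * ω z)).im| < Real.pi / 4 ∧ (1 - (α:ℂ) * ω z) ≠ 0 := by
    intro z hz
    have := hfac2' z hz
    rwa [hsub z] at this
  -- differentiability of L and q
  have hωd' : ∀ z ∈ D, DifferentiableAt ℂ ω z :=
    fun z hz => hωd.differentiableAt (hDopen.mem_nhds hz)
  have hin1 : ∀ z ∈ D, DifferentiableAt ℂ (fun w => 1 + lam * (α:ℂ) * ω w) z :=
    fun z hz => (differentiableAt_const _).add ((hωd' z hz).const_mul _)
  have hin2 : ∀ z ∈ D, DifferentiableAt ℂ (fun w => 1 - (α:ℂ) * ω w) z :=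
    fun z hz => (differentiableAt_const _).sub ((hωd' z hz).const_mul _)
  have hLd : DifferentiableOn ℂ L D := by
    intro z hz
    refine DifferentiableAt.differentiableWithinAt ?_
    exact (((Complex.differentiableAt_log (hfac1 z hz).1).comp z (hin1 z hz)).sub
      ((Complex.differentiableAt_log (hfac2 z hz).1).comp z (hin2 z hz)))
  set q : ℂ → ℂ := fun w => (α:ℂ) * ℓ w + L w with hqdef
  have hqd : DifferentiableOn ℂ q D := by
    intro z hz
    exact (((hℓd.differentiableAt (hDopen.mem_nhds hz)).const_mul _).add
      (hLd.differentiableAt (hDopen.mem_nhds hz))).differentiableWithinAt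
  -- derivative of H
  have hHder : ∀ z ∈ D, deriv H z * (1 - (α:ℂ) * ω z) = Complex.exp ((α:ℂ) * ℓ z) := by
    intro z hz
    have hev : (fun w => H w - G w) =ᶠ[nhds z] φα :=
      Filter.eventuallyEq_of_mem (hDopen.mem_nhds hz) (fun w hw => hHG w hw)
    have h1 : deriv H z - deriv G z = Complex.exp ((α:ℂ) * ℓ z) := by
      rw [← deriv_fun_sub (hHd.differentiableAt (hDopen.mem_nhds hz))
        (hGd.differentiableAt (hDopen.mem_nhds hz)), hev.deriv_eq, (hφα z hz).deriv]
    rw [hGdil z hz] at h1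
    rw [← h1]; ring
  -- derivative of Φ equals exp (q z)
  set Φ : ℂ → ℂ := fun w => H w + lam * G w with hΦdef
  have hΦd : DifferentiableOn ℂ Φ D := by
    intro z hz
    exact ((hHd.differentiableAt (hDopen.mem_nhds hz)).add
      ((hGd.differentiableAt (hDopen.mem_nhds hz)).const_mul lam)).differentiableWithinAt
  have hΦder : ∀ z ∈ D, deriv Φ z = Complex.exp (q z) := by
    intro z hz
    have h1 : deriv Φ z = deriv H z + lam * deriv G z := by
      have hH' := (hHd.differentiableAt (hDopen.mem_nhds hz)).hasDerivAt
      have hG' := (hGd.differentiableAt (hDopen.mem_nhds hz)).hasDerivAt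
      exact (hH'.add (hG'.const_mul lam)).deriv
    rw [h1, hGdil z hz]
    have h3 : Complex.exp (q z) =
        Complex.exp ((α:ℂ) * ℓ z) * ((1 + lam * (α:ℂ) * ω z) / (1 - (α:ℂ) * ω z)) := by
      show Complex.exp ((α:ℂ) * ℓ z + (Complex.log (1 + lam * (α:ℂ) * ω z)
        - Complex.log (1 - (α:ℂ) * ω z))) = _
      rw [Complex.exp_add, Complex.exp_sub, Complex.exp_log (hfac1 z hz).2.2,
        Complex.exp_log (hfac2 z hz).2.2]
    rw [h3, ← hHder z hz]
    field_simp [(hfac2 z hz).2.2]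
  -- second derivative
  have hΦ'' : ∀ z ∈ D, deriv (deriv Φ) z = Complex.exp (q z) * deriv q z := by
    intro z hz
    have hev : deriv Φ =ᶠ[nhds z] (fun w => Complex.exp (q w)) :=
      Filter.eventuallyEq_of_mem (hDopen.mem_nhds hz) (fun w hw => hΦder w hw)
    rw [hev.deriv_eq]
    exact ((Complex.hasDerivAt_exp (q z)).comp z
      ((hqd.differentiableAt (hDopen.mem_nhds hz)).hasDerivAt)).deriv
  -- deriv q decomposition
  have hqderiv : ∀ z ∈ D, deriv q z = (α:ℂ) * deriv ℓ z + deriv L z := by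
    intro z hz
    rw [hqdef]
    rw [deriv_fun_add ((hℓd.differentiableAt (hDopen.mem_nhds hz)).const_mul _)
      (hLd.differentiableAt (hDopen.mem_nhds hz)),
      deriv_const_mul _ (hℓd.differentiableAt (hDopen.mem_nhds hz))]
  -- the circle
  set c : ℝ → ℂ := fun θ => (r:ℂ) * Complex.exp ((θ:ℂ) * Complex.I) with hcdef
  have hcD : ∀ θ : ℝ, c θ ∈ D := by
    intro θ
    rw [hDdef, mem_ball_zero_iff]
    show ‖(r:ℂ) * Complex.exp ((θ:ℂ) * Complex.I)‖ < 1
    rw [norm_mul, Complex.norm_real, Real.norm_eq_abs, Complex.norm_exp_ofReal_mul_I,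
      _root_.abs_of_nonneg hr0.le, mul_one]
    exact hr1
  -- pointwise form of the integrand
  have hpoint : ∀ θ : ℝ,
      (1 + c θ * deriv (deriv Φ) (c θ) / deriv Φ (c θ)).re
        = (1 + α * (c θ * deriv ℓ (c θ)).re) + (c θ * deriv L (c θ)).re := by
    intro θ
    have hz := hcD θ
    have h1 : c θ * deriv (deriv Φ) (c θ) / deriv Φ (c θ) = c θ * deriv q (c θ) := by
      rw [hΦ'' _ hz, hΦder _ hz]
      field_simp [Complex.exp_ne_zero]
    rw [h1, hqderiv _ hz]
    have h2 : (1:ℂ) + c θ * ((α:ℂ) * deriv ℓ (c θ) + deriv L (c θ))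
        = 1 + ((α:ℂ) * (c θ * deriv ℓ (c θ)) + c θ * deriv L (c θ)) := by ring
    rw [h2]
    simp only [Complex.add_re, Complex.one_re, Complex.re_ofReal_mul]
    ring
  -- FTC for the L part
  have hJ : ∀ θ : ℝ, HasDerivAt (fun t : ℝ => (L (c t)).im) ((c θ * deriv L (c θ)).re) θ := by
    intro θ
    have hm : HasDerivAt (fun w : ℂ => w * Complex.I) Complex.I ((θ:ℝ):ℂ) := by
      simpa using (hasDerivAt_id (((θ:ℝ)):ℂ)).mul_const Complex.I
    have he : HasDerivAt (fun w : ℂ => Complex.exp (w * Complex.I))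
        (Complex.exp (((θ:ℝ):ℂ) * Complex.I) * Complex.I) ((θ:ℝ):ℂ) := by
      simpa [Function.comp_def] using (Complex.hasDerivAt_exp (((θ:ℝ):ℂ) * Complex.I)).comp ((θ:ℝ):ℂ) hm
    have hinner : HasDerivAt (fun w : ℂ => (r:ℂ) * Complex.exp (w * Complex.I))
        ((r:ℂ) * (Complex.exp (((θ:ℝ):ℂ) * Complex.I) * Complex.I)) ((θ:ℝ):ℂ) :=
      he.const_mul _
    have houter : HasDerivAt L (deriv L (c θ)) ((fun w : ℂ => (r:ℂ) * Complex.exp (w * Complex.I)) ((θ:ℝ):ℂ)) := by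
      show HasDerivAt L (deriv L (c θ)) ((r:ℂ) * Complex.exp (((θ:ℝ):ℂ) * Complex.I))
      exact (hLd.differentiableAt (hDopen.mem_nhds (hcD θ))).hasDerivAt
    have hcomp := (houter.comp ((θ:ℝ):ℂ) hinner).comp_ofReal
    have him2 : HasDerivAt (fun t : ℝ => (L ((r:ℂ) * Complex.exp ((t:ℂ) * Complex.I))).im)
        ((deriv L (c θ) * ((r:ℂ) * (Complex.exp (((θ:ℝ):ℂ) * Complex.I) * Complex.I))).im) θ := by
      simpa [Function.comp_def, Complex.imCLM_apply] using
        Complex.imCLM.hasFDerivAt.comp_hasDerivAt θ hcomp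
    have heq : deriv L ((r:ℂ) * Complex.exp (((θ:ℝ):ℂ) * Complex.I))
          * ((r:ℂ) * (Complex.exp (((θ:ℝ):ℂ) * Complex.I) * Complex.I))
        = ((r:ℂ) * Complex.exp (((θ:ℝ):ℂ) * Complex.I)
            * deriv L ((r:ℂ) * Complex.exp (((θ:ℝ):ℂ) * Complex.I))) * Complex.I := by
      ring
    have hval : (deriv L (c θ) * ((r:ℂ) * (Complex.exp (((θ:ℝ):ℂ) * Complex.I) * Complex.I))).im
        = (c θ * deriv L (c θ)).re := by
      simp only [hcdef]
      rw [heq, Complex.mul_I_im]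
    rw [hval] at him2
    exact him2
  -- continuity facts
  have hccont : Continuous c := by
    apply continuous_const.mul
    exact Complex.continuous_exp.comp (Complex.continuous_ofReal.mul continuous_const)
  have hℓ'cont : ContinuousOn (deriv ℓ) D :=
    ((hℓd.analyticOnNhd hDopen).deriv).continuousOn
  have hL'cont : ContinuousOn (deriv L) D :=
    ((hLd.analyticOnNhd hDopen).deriv).continuousOn
  have hcont1 : Continuous (fun θ : ℝ => 1 + α * (c θ * deriv ℓ (c θ)).re) := by
    rw [← continuousOn_univ]
    apply ContinuousOn.add continuousOn_const
    apply ContinuousOn.mul continuousOn_const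
    apply Complex.continuous_re.comp_continuousOn
    exact ContinuousOn.mul (hccont.continuousOn) (hℓ'cont.comp hccont.continuousOn
      (fun θ _ => hcD θ))
  have hcont2 : Continuous (fun θ : ℝ => (c θ * deriv L (c θ)).re) := by
    rw [← continuousOn_univ]
    apply Complex.continuous_re.comp_continuousOn
    exact ContinuousOn.mul (hccont.continuousOn) (hL'cont.comp hccont.continuousOn
      (fun θ _ => hcD θ))
  -- rewrite the integral
  have hIeq : (∫ θ in θ₁..θ₂,
      (1 + c θ * deriv (deriv Φ) (c θ) / deriv Φ (c θ)).re)
      = (∫ θ in θ₁..θ₂, (1 + α * (c θ * deriv ℓ (c θ)).re))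
        + ∫ θ in θ₁..θ₂, (c θ * deriv L (c θ)).re := by
    rw [intervalIntegral.integral_congr (g := fun θ =>
      (1 + α * (c θ * deriv ℓ (c θ)).re) + (c θ * deriv L (c θ)).re)
      (fun θ _ => hpoint θ)]
    exact intervalIntegral.integral_add (hcont1.intervalIntegrable _ _)
      (hcont2.intervalIntegrable _ _)
  have hI2 : (∫ θ in θ₁..θ₂, (c θ * deriv L (c θ)).re)
      = (L (c θ₂)).im - (L (c θ₁)).im :=
    intervalIntegral.integral_eq_sub_of_hasDerivAt (fun t _ => hJ t)
      (hcont2.intervalIntegrable _ _)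
  have hI1 : 0 ≤ ∫ θ in θ₁..θ₂, (1 + α * (c θ * deriv ℓ (c θ)).re) := by
    apply intervalIntegral.integral_nonneg hθle
    intro t _
    have h1 := hP (c t) (hcD t)
    nlinarith [mul_le_mul_of_nonneg_left h1 hα0]
  -- bounds on the endpoint values
  have hLbound : ∀ θ : ℝ, |(L (c θ)).im| < Real.pi / 2 := by
    intro θ
    have h1 := (hfac1 (c θ) (hcD θ)).2.1
    have h2 := (hfac2 (c θ) (hcD θ)).2.1
    have : (L (c θ)).im = (Complex.log (1 + lam * (α:ℂ) * ω (c θ))).im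
        - (Complex.log (1 - (α:ℂ) * ω (c θ))).im := by
      rw [hLdef]; simp [Complex.sub_im]
    rw [this]
    rw [abs_lt] at h1 h2 ⊢
    constructor <;> [linarith; linarith]
  have hb1 := hLbound θ₁
  have hb2 := hLbound θ₂
  rw [abs_lt] at hb1 hb2
  have final := hIeq
  rw [hI2] at final
  calc -Real.pi < 0 + (((L (c θ₂)).im) - ((L (c θ₁)).im)) := by linarith
    _ ≤ (∫ θ in θ₁..θ₂, (1 + α * (c θ * deriv ℓ (c θ)).re))
        + (((L (c θ₂)).im) - ((L (c θ₁)).im)) := by linarith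
    _ = ∫ θ in θ₁..θ₂, (1 + c θ * deriv (deriv Φ) (c θ) / deriv Φ (c θ)).re := final.symm
end

section
/- Let f = h + conj(g) be a sense-preserving harmonic mapping on 𝔻 with dilatation ω, and suppose f is the horizontal shear of φ, where φ is holomorphic, injective and convex on 𝔻 with φ(0) = 0, φ'(0) = 1. Let x₀ ∈ (0, 1) be the unique positive root of xπ + 2·arcsin(x) = π/2 (x₀ ≈ 0.303). Then for every real α with −x₀ ≤ α ≤ 0 and every λ ∈ ℂ with |λ| ≤ 1, setting Φ_λ = H + λG, one has Re Φ_λ'(z) > 0 for all z ∈ 𝔻; consequently each Φ_λ is injective on 𝔻. -/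
open Complex Metric Set Filter Topology

namespace Stmt8Aux


lemma abs_lt_iff_normSq_lt {x : ℂ} : ‖x‖ < 1 ↔ Complex.normSq x < 1 := by
  rw [← Complex.sq_norm]
  constructor
  · intro hx; nlinarith [norm_nonneg x]
  · intro hx; nlinarith [norm_nonneg x]

lemma moebius_mem {w x : ℂ} (hw : ‖w‖ < 1) (hx : ‖x‖ < 1) :
    (1 - (starRingEnd ℂ) w * x) ≠ 0 ∧
      ‖(x - w) / (1 - (starRingEnd ℂ) w * x)‖ < 1 := by
  have hde : ‖(starRingEnd ℂ) w * x‖ < 1 := by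
    rw [norm_mul, Complex.norm_conj]
    nlinarith [norm_nonneg w, norm_nonneg x]
  have hne : (1 : ℂ) - (starRingEnd ℂ) w * x ≠ 0 := by
    intro h0
    have h1 : (starRingEnd ℂ) w * x = 1 := by linear_combination -h0
    rw [h1] at hde; simp at hde
  have hkey : Complex.normSq (1 - (starRingEnd ℂ) w * x) - Complex.normSq (x - w)
      = (1 - Complex.normSq w) * (1 - Complex.normSq x) := by
    simp only [Complex.normSq_apply, Complex.sub_re, Complex.sub_im, Complex.mul_re,
      Complex.mul_im, Complex.one_re, Complex.one_im, Complex.conj_re, Complex.conj_im]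
    ring
  have h2 : Complex.normSq (x - w) < Complex.normSq (1 - (starRingEnd ℂ) w * x) := by
    nlinarith [abs_lt_iff_normSq_lt.mp hw, abs_lt_iff_normSq_lt.mp hx]
  refine ⟨hne, ?_⟩
  rw [norm_div, div_lt_one (norm_pos_iff.mpr hne)]
  rw [← Complex.sq_norm, ← Complex.sq_norm] at h2
  exact lt_of_pow_lt_pow_left₀ 2 (norm_nonneg _) h2

/-- Core geometric lemma: a univalent function with convex image and φ(0)=0, φ'(0)=1
satisfies Re (conj z * φ z) ≥ 0 on the unit ball. -/
lemma core (φ : ℂ → ℂ) (hφd : DifferentiableOn ℂ φ (ball 0 1))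
    (hφinj : Set.InjOn φ (ball 0 1)) (hφ0 : φ 0 = 0) (hφp0 : deriv φ 0 = 1)
    (hconv : Convex ℝ (φ '' ball 0 1)) :
    ∀ z ∈ ball (0:ℂ) 1, 0 ≤ ((starRingEnd ℂ) z * φ z).re := by
  have hDo : IsOpen (ball (0:ℂ) 1) := isOpen_ball
  have hDc : IsPreconnected (ball (0:ℂ) 1) := (convex_ball (0:ℂ) 1).isPreconnected
  have h0D : (0:ℂ) ∈ ball (0:ℂ) 1 := by simp
  have hanal : AnalyticOnNhd ℂ φ (ball 0 1) := hφd.analyticOnNhd hDo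
  have homap : ∀ s ⊆ ball (0:ℂ) 1, IsOpen s → IsOpen (φ '' s) := by
    rcases hanal.is_constant_or_isOpen hDc with ⟨v, hv⟩ | hop
    · exfalso
      have h1 : φ =ᶠ[𝓝 (0:ℂ)] fun _ => v := eventually_of_mem (hDo.mem_nhds h0D) hv
      have h2 := h1.deriv_eq
      rw [hφp0, deriv_const] at h2
      exact one_ne_zero h2
    · exact hop
  have hUo : IsOpen (φ '' ball 0 1) := homap _ le_rfl hDo
  set U := φ '' ball 0 1 with hU
  set g := Function.invFunOn φ (ball 0 1) with hgdef
  have gleft : ∀ w ∈ ball (0:ℂ) 1, g (φ w) = w := fun w hw => hφinj.leftInvOn_invFunOn hw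
  have gright : ∀ u ∈ U, φ (g u) = u := by rintro u ⟨w, hw, rfl⟩; rw [gleft w hw]
  have gmem : ∀ u ∈ U, g u ∈ ball (0:ℂ) 1 := by rintro u ⟨w, hw, rfl⟩; rw [gleft w hw]; exact hw
  have g0 : g 0 = 0 := by have := gleft 0 h0D; rwa [hφ0] at this
  have h0U : (0:ℂ) ∈ U := ⟨0, h0D, hφ0⟩
  have gcont : ∀ u ∈ U, ContinuousAt g u := by
    intro u hu
    rw [ContinuousAt, _root_.tendsto_nhds]
    intro t hto htm
    refine mem_of_superset ((homap _ inter_subset_right (hto.inter hDo)).mem_nhds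
      ⟨g u, ⟨htm, gmem u hu⟩, gright u hu⟩) ?_
    rintro x ⟨v, ⟨hvt, hvD⟩, rfl⟩
    simpa [Set.mem_preimage, gleft v hvD] using hvt
  have hderiv_anal : AnalyticOnNhd ℂ (deriv φ) (ball 0 1) := hanal.deriv
  have hpunct : ∀ w ∈ ball (0:ℂ) 1, ∀ᶠ v in 𝓝[≠] w, deriv φ v ≠ 0 := by
    intro w hw
    rcases (hderiv_anal w hw).eventually_eq_zero_or_eventually_ne_zero with hc | hc
    · exfalso
      have hc' : deriv φ =ᶠ[𝓝 w] 0 := hc.mono fun z hz => by simpa using hz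
      have := hderiv_anal.eqOn_zero_of_preconnected_of_eventuallyEq_zero hDc hw hc'
      have h2 := this h0D
      rw [hφp0] at h2
      simpa using h2
    · exact hc
  have gdiff_good : ∀ u ∈ U, deriv φ (g u) ≠ 0 → HasDerivAt g (deriv φ (g u))⁻¹ u := by
    intro u hu hne
    have hder : HasDerivAt φ (deriv φ (g u)) (g u) :=
      (hφd.differentiableAt (hDo.mem_nhds (gmem u hu))).hasDerivAt
    exact hder.of_local_left_inverse (gcont u hu) hne
      (eventually_of_mem (hUo.mem_nhds hu) gright)
  have gdiff : ∀ u ∈ U, DifferentiableAt ℂ g u := by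
    intro u hu
    by_cases hne : deriv φ (g u) = 0
    case neg => exact (gdiff_good u hu hne).differentiableAt
    have hev : ∀ᶠ v in 𝓝 (g u), v ∈ ball (0:ℂ) 1 := hDo.mem_nhds (gmem u hu)
    have h2 : ∀ᶠ v in 𝓝[≠] (g u), deriv φ v ≠ 0 ∧ v ∈ ball (0:ℂ) 1 :=
      (hpunct _ (gmem u hu)).and (eventually_nhdsWithin_of_eventually_nhds hev)
    rw [eventually_nhdsWithin_iff] at h2
    rcases _root_.eventually_nhds_iff.mp h2 with ⟨V, hV, hVo, hVmem⟩
    have hV'o : IsOpen (V ∩ ball (0:ℂ) 1) := hVo.inter hDo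
    have hV'm : g u ∈ V ∩ ball (0:ℂ) 1 := ⟨hVmem, gmem u hu⟩
    have hWo : IsOpen (φ '' (V ∩ ball (0:ℂ) 1)) := homap _ inter_subset_right hV'o
    have huW : u ∈ φ '' (V ∩ ball (0:ℂ) 1) := ⟨g u, hV'm, gright u hu⟩
    have hd : ∀ᶠ x in 𝓝[≠] u, DifferentiableAt ℂ g x := by
      rw [eventually_nhdsWithin_iff]
      filter_upwards [hWo.mem_nhds huW] with x hx hxne
      rcases hx with ⟨v, hvV', rfl⟩
      have hvD : v ∈ ball (0:ℂ) 1 := hvV'.2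
      have hgx : g (φ v) = v := gleft v hvD
      have hvne : v ∈ ({g u}ᶜ : Set ℂ) := by
        simp only [Set.mem_compl_iff, Set.mem_singleton_iff]
        intro hvv
        apply hxne
        rw [hvv, gright u hu]
        exact Set.mem_singleton u
      have hder_ne : deriv φ v ≠ 0 := (hV v hvV'.1 hvne).1
      exact (gdiff_good (φ v) ⟨v, hvD, rfl⟩ (by rwa [hgx])).differentiableAt
    exact (Complex.analyticAt_of_differentiable_on_punctured_nhds_of_continuousAt hd
      (gcont u hu)).differentiableAt
  -- main part
  intro z hz
  rcases eq_or_ne z 0 with rfl | hzne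
  · simp
  have hzabs : ‖z‖ < 1 := by simpa [mem_ball_zero_iff] using hz
  set F := φ z with hF
  have hFU : F ∈ U := ⟨z, hz, rfl⟩
  have key : ∀ τ : ℝ, 0 < τ → τ ≤ 1 → 0 ≤ ((starRingEnd ℂ) z * g ((τ:ℂ) * F)).re := by
    intro τ hτ0 hτ1
    have hsegU : ∀ p ∈ U, ∀ q ∈ U, ∀ a b : ℝ, 0 ≤ a → 0 ≤ b → a + b = 1 → a • p + b • q ∈ U :=
      fun p hp q hq a b ha hb hab => hconv hp hq ha hb hab
    have hτF : (τ:ℂ) * F ∈ U := by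
      have := hsegU F hFU 0 h0U τ (1 - τ) (le_of_lt hτ0) (by linarith) (by ring)
      simpa [Complex.real_smul] using this
    set w := g ((τ:ℂ) * F) with hwdef
    have hwD : w ∈ ball (0:ℂ) 1 := gmem _ hτF
    have hwlt : ‖w‖ < 1 := by simpa [mem_ball_zero_iff] using hwD
    set T : ℂ → ℂ := fun ζ => g ((1 - (τ:ℂ)) * φ ζ + (τ:ℂ) * F) with hTdef
    have hTin : ∀ ζ ∈ ball (0:ℂ) 1, ((1 - (τ:ℂ)) * φ ζ + (τ:ℂ) * F) ∈ U := by
      intro ζ hζ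
      have := hsegU (φ ζ) ⟨ζ, hζ, rfl⟩ F hFU (1 - τ) τ (by linarith) (le_of_lt hτ0) (by ring)
      simpa [Complex.real_smul, Complex.ofReal_sub, Complex.ofReal_one] using this
    have hTmem : ∀ ζ ∈ ball (0:ℂ) 1, T ζ ∈ ball (0:ℂ) 1 := fun ζ hζ => gmem _ (hTin ζ hζ)
    have hTz : T z = z := by
      have harg : (1 - (τ:ℂ)) * φ z + (τ:ℂ) * F = F := by rw [← hF]; ring
      show g ((1 - (τ:ℂ)) * φ z + (τ:ℂ) * F) = z
      rw [harg, hF, gleft z hz]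
    have hT0 : T 0 = w := by
      show g ((1 - (τ:ℂ)) * φ 0 + (τ:ℂ) * F) = w
      rw [hφ0, mul_zero, zero_add]
    have hTdiff : ∀ ζ ∈ ball (0:ℂ) 1, DifferentiableAt ℂ T ζ := by
      intro ζ hζ
      have h1 : DifferentiableAt ℂ (fun ξ => (1 - (τ:ℂ)) * φ ξ + (τ:ℂ) * F) ζ :=
        ((hφd.differentiableAt (hDo.mem_nhds hζ)).const_mul _).add_const _
      exact (gdiff _ (hTin ζ hζ)).comp ζ h1
    set S : ℂ → ℂ := fun ζ => (T ζ - w) / (1 - (starRingEnd ℂ) w * T ζ) with hSdef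
    have hSmaps : ∀ ζ ∈ ball (0:ℂ) 1, ‖S ζ‖ < 1 := fun ζ hζ =>
      (moebius_mem hwlt (by simpa [mem_ball_zero_iff] using hTmem ζ hζ)).2
    have hSdiff : DifferentiableOn ℂ S (ball 0 1) := by
      intro ζ hζ
      have hTd := hTdiff ζ hζ
      have hne := (moebius_mem hwlt (by simpa [mem_ball_zero_iff] using hTmem ζ hζ)).1
      exact ((hTd.sub_const w).div ((differentiableAt_const _).sub
        ((differentiableAt_const _).mul hTd)) hne).differentiableWithinAt
    have hS0 : S 0 = 0 := by
      show (T 0 - w) / (1 - (starRingEnd ℂ) w * T 0) = 0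
      rw [hT0, sub_self, zero_div]
    have hmapsTo : Set.MapsTo S (ball 0 1) (ball (S 0) 1) := by
      intro ζ hζ
      rw [hS0, mem_ball_zero_iff]
      exact hSmaps ζ hζ
    have hSch := Complex.dist_le_div_mul_dist_of_mapsTo_ball hSdiff (hmapsTo.mono_right ball_subset_closedBall) hz
    rw [hS0, dist_zero_right, dist_zero_right] at hSch
    have hSch' : ‖S z‖ ≤ ‖z‖ := by
      simpa using hSch
    have hSz : S z = (z - w) / (1 - (starRingEnd ℂ) w * z) := by
      show (T z - w) / (1 - (starRingEnd ℂ) w * T z) = _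
      rw [hTz]
    have hden := (moebius_mem hwlt hzabs).1
    have habs : ‖z - w‖ ≤ ‖z‖ * ‖1 - (starRingEnd ℂ) w * z‖ := by
      rw [hSz, norm_div] at hSch'
      exact (div_le_iff₀ (norm_pos_iff.mpr hden)).mp hSch'
    have hnsq : Complex.normSq (z - w) ≤
        Complex.normSq z * Complex.normSq (1 - (starRingEnd ℂ) w * z) := by
      rw [← Complex.sq_norm, ← Complex.sq_norm, ← Complex.sq_norm]
      nlinarith [norm_nonneg (z - w), norm_nonneg z,
        norm_nonneg (1 - (starRingEnd ℂ) w * z), habs]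
    have hzsq : z.re ^ 2 + z.im ^ 2 < 1 := by
      have := abs_lt_iff_normSq_lt.mp hzabs
      simpa [Complex.normSq_apply, sq] using this
    simp only [Complex.normSq_apply, Complex.mul_re, Complex.mul_im, Complex.sub_re,
      Complex.sub_im, Complex.one_re, Complex.one_im, Complex.conj_re, Complex.conj_im] at hnsq ⊢
    nlinarith [hnsq, hzsq, sq_nonneg w.re, sq_nonneg w.im, sq_nonneg (z.re * w.im - z.im * w.re),
      mul_nonneg (mul_nonneg (add_nonneg (sq_nonneg w.re) (sq_nonneg w.im))
        (by nlinarith : (0:ℝ) ≤ 1 - (z.re * z.re + z.im * z.im)))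
        (by nlinarith : (0:ℝ) ≤ 1 + (z.re * z.re + z.im * z.im))]
  -- limit as τ → 0⁺
  have hg1 : HasDerivAt g 1 0 := by
    have h1 := gdiff_good 0 h0U (by rw [g0, hφp0]; exact one_ne_zero)
    rw [g0, hφp0, inv_one] at h1
    exact h1
  have hM : HasDerivAt (fun τ : ℝ => g ((τ:ℂ) * F)) F 0 := by
    have hi : HasDerivAt (fun x : ℂ => x * F) F 0 := hasDerivAt_mul_const F
    have hg0' : HasDerivAt g 1 ((0:ℂ) * F) := by rwa [zero_mul]
    have h1 : HasDerivAt (g ∘ fun x : ℂ => x * F) (1 * F) 0 := hg0'.comp (0:ℂ) hi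
    rw [one_mul] at h1
    exact h1.comp_ofReal
  rw [hasDerivAt_iff_tendsto_slope] at hM
  have hcont : Continuous fun x : ℂ => ((starRingEnd ℂ) z * x).re :=
    Complex.continuous_re.comp (continuous_const.mul continuous_id)
  have hM2 : Tendsto (fun τ : ℝ => ((starRingEnd ℂ) z * slope (fun τ : ℝ => g ((τ:ℂ) * F)) 0 τ).re)
      (𝓝[≠] (0:ℝ)) (𝓝 (((starRingEnd ℂ) z * F).re)) := (hcont.tendsto F).comp hM
  have hM3 : Tendsto (fun τ : ℝ => ((starRingEnd ℂ) z * slope (fun τ : ℝ => g ((τ:ℂ) * F)) 0 τ).re)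
      (𝓝[>] (0:ℝ)) (𝓝 (((starRingEnd ℂ) z * F).re)) :=
    hM2.mono_left (nhdsWithin_mono _ fun x hx => ne_of_gt hx)
  have hev : ∀ᶠ τ in 𝓝[>] (0:ℝ),
      0 ≤ ((starRingEnd ℂ) z * slope (fun τ : ℝ => g ((τ:ℂ) * F)) 0 τ).re := by
    have hIoc : Set.Ioc (0:ℝ) 1 ∈ 𝓝[>] (0:ℝ) := Ioc_mem_nhdsGT_of_mem ⟨le_refl 0, one_pos⟩
    filter_upwards [hIoc] with τ hτ
    have hslope : slope (fun τ : ℝ => g ((τ:ℂ) * F)) 0 τ = τ⁻¹ • g ((τ:ℂ) * F) := by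
      rw [slope_def_module]
      simp [g0]
    rw [hslope, mul_smul_comm, Complex.real_smul, Complex.re_ofReal_mul]
    exact mul_nonneg (inv_nonneg.mpr hτ.1.le) (key τ hτ.1 hτ.2)
  exact ge_of_tendsto hM3 hev



lemma arg_exp' (w : ℂ) (hw : |w.im| < Real.pi) : Complex.arg (Complex.exp w) = w.im := by
  rw [Complex.exp_eq_exp_re_mul_sin_add_cos, ← Complex.ofReal_exp,
    Complex.arg_real_mul _ (Real.exp_pos _),
    Complex.arg_cos_add_sin_mul_I ⟨(abs_lt.mp hw).1, (abs_lt.mp hw).2.le⟩]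

lemma arg_one_add {u : ℂ} {s : ℝ} (hs0 : 0 ≤ s) (hs1 : s < 1) (hu : ‖u‖ ≤ s) :
    |Complex.arg (1 + u)| ≤ Real.arcsin s ∧ 0 < (1 + u).re := by
  have hure : |u.re| ≤ s := (Complex.abs_re_le_norm u).trans hu
  have hpos : 0 < (1 + u).re := by
    simp only [Complex.add_re, Complex.one_re]
    rcases abs_le.mp hure with ⟨h1, h2⟩
    linarith
  have hne : (1 + u) ≠ 0 := by
    intro h0
    rw [h0] at hpos
    simp at hpos
  have habspos : 0 < ‖1 + u‖ := norm_pos_iff.mpr hne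
  have hlt : |Complex.arg (1 + u)| < Real.pi / 2 :=
    Complex.abs_arg_lt_pi_div_two_iff.mpr (Or.inl hpos)
  have hsin : |Real.sin (Complex.arg (1 + u))| ≤ s := by
    rw [Complex.sin_arg, abs_div]
    have him : (1 + u).im = u.im := by simp
    have hid : u.im ^ 2 ≤ (‖u‖) ^ 2 * (‖1 + u‖) ^ 2 := by
      rw [Complex.sq_norm, Complex.sq_norm]
      simp only [Complex.normSq_apply, Complex.add_re, Complex.add_im, Complex.one_re,
        Complex.one_im]
      nlinarith [sq_nonneg (u.re + u.re ^ 2 + u.im ^ 2)]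
    have h1 : |u.im| ≤ ‖u‖ * ‖1 + u‖ := by
      nlinarith [abs_nonneg u.im, norm_nonneg u,
        norm_nonneg (1 + u), hid, _root_.sq_abs u.im,
        mul_nonneg (norm_nonneg u) (norm_nonneg (1 + u)),
        sq_nonneg (|u.im| - ‖u‖ * ‖1 + u‖)]
    have habs2 : |u.im| ≤ s * ‖1 + u‖ :=
      h1.trans (mul_le_mul_of_nonneg_right hu (norm_nonneg _))
    rw [him, abs_of_pos habspos]
    exact (div_le_iff₀ habspos).mpr habs2
  rcases abs_lt.mp hlt with ⟨hθ1, hθ2⟩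
  refine ⟨abs_le.mpr ⟨?_, ?_⟩, hpos⟩
  · have h3 : -Complex.arg (1 + u) = Real.arcsin (Real.sin (-Complex.arg (1 + u))) :=
      (Real.arcsin_sin (by linarith) (by linarith)).symm
    have h4 : Real.sin (-Complex.arg (1 + u)) ≤ s := by
      rw [Real.sin_neg]
      have := neg_abs_le (Real.sin (Complex.arg (1 + u)))
      linarith [hsin, abs_le.mp hsin]
    have := Real.monotone_arcsin h4
    rw [← h3] at this
    linarith
  · have h3 : Complex.arg (1 + u) = Real.arcsin (Real.sin (Complex.arg (1 + u))) :=
      (Real.arcsin_sin (by linarith) (by linarith)).symm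
    have h4 : Real.sin (Complex.arg (1 + u)) ≤ s := (le_abs_self _).trans hsin
    have := Real.monotone_arcsin h4
    rw [← h3] at this
    exact this



/-- Noshiro–Warschawski: positive real part of the derivative implies injectivity on the ball. -/
lemma njw (Φ Φ' : ℂ → ℂ)
    (hd : ∀ z ∈ ball (0:ℂ) 1, HasDerivAt Φ (Φ' z) z)
    (hpos : ∀ z ∈ ball (0:ℂ) 1, 0 < (Φ' z).re) :
    Set.InjOn Φ (ball 0 1) := by
  intro z1 h1 z2 h2 heq
  by_contra hne
  set d := z2 - z1 with hdd
  have hd0 : d ≠ 0 := sub_ne_zero.mpr fun hh => hne hh.symm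
  have hγ : ∀ t ∈ Icc (0:ℝ) 1, z1 + (t:ℂ) * d ∈ ball (0:ℂ) 1 := by
    intro t ht
    have hc := (convex_ball (0:ℂ) 1) h1 h2 (by linarith [ht.2] : (0:ℝ) ≤ 1 - t) ht.1 (by ring)
    have : (1 - t : ℝ) • z1 + t • z2 = z1 + (t:ℂ) * d := by
      simp only [Complex.real_smul, hdd, Complex.ofReal_sub, Complex.ofReal_one]
      ring
    rwa [this] at hc
  set F : ℝ → ℝ := fun t => ((starRingEnd ℂ) d * Φ (z1 + (t:ℂ) * d)).re with hFdef
  have hder : ∀ t ∈ Icc (0:ℝ) 1,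
      HasDerivAt F (Complex.normSq d * (Φ' (z1 + (t:ℂ) * d)).re) t := by
    intro t ht
    have hinner : HasDerivAt (fun x : ℂ => z1 + x * d) d (t:ℂ) := by
      simpa using (hasDerivAt_mul_const d).const_add z1
    have houter : HasDerivAt Φ (Φ' (z1 + (t:ℂ) * d)) (z1 + (t:ℂ) * d) := hd _ (hγ t ht)
    have hcomp : HasDerivAt (fun x : ℂ => Φ (z1 + x * d))
        (Φ' (z1 + (t:ℂ) * d) * d) (t:ℂ) := houter.comp (t:ℂ) hinner
    have hre : HasDerivAt (fun τ : ℝ => Φ (z1 + (τ:ℂ) * d))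
        (Φ' (z1 + (t:ℂ) * d) * d) t := hcomp.comp_ofReal
    have hm : HasDerivAt (fun τ : ℝ => (starRingEnd ℂ) d * Φ (z1 + (τ:ℂ) * d))
        ((starRingEnd ℂ) d * (Φ' (z1 + (t:ℂ) * d) * d)) t := hre.const_mul _
    have hfinal := Complex.reCLM.hasFDerivAt.comp_hasDerivAt t hm
    have hval : ((starRingEnd ℂ) d * (Φ' (z1 + (t:ℂ) * d) * d)).re
        = Complex.normSq d * (Φ' (z1 + (t:ℂ) * d)).re := by
      have he : (starRingEnd ℂ) d * (Φ' (z1 + (t:ℂ) * d) * d)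
          = ((Complex.normSq d : ℝ) : ℂ) * Φ' (z1 + (t:ℂ) * d) := by
        rw [← Complex.mul_conj]
        ring
      rw [he, Complex.re_ofReal_mul]
    rw [← hval]
    exact hfinal
  have hmono : StrictMonoOn F (Icc 0 1) := by
    apply strictMonoOn_of_deriv_pos (convex_Icc 0 1)
    · exact fun t ht => (hder t ht).continuousAt.continuousWithinAt
    · intro t ht
      rw [interior_Icc] at ht
      rw [(hder t (Ioo_subset_Icc_self ht)).deriv]
      exact mul_pos (Complex.normSq_pos.mpr hd0) (hpos _ (hγ t (Ioo_subset_Icc_self ht)))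
  have h01 : F 0 < F 1 :=
    hmono ⟨le_refl 0, zero_le_one⟩ ⟨zero_le_one, le_refl 1⟩ one_pos
  have heqF : F 0 = F 1 := by
    have e0 : z1 + ((0:ℝ):ℂ) * d = z1 := by simp
    have e1 : z1 + ((1:ℝ):ℂ) * d = z2 := by simp [hdd]
    simp only [hFdef, e0, e1, heq]
  linarith


end Stmt8Aux


open Stmt8Aux in
/-- `f = h + conj g` the horizontal shear of a normalized convex univalent
`φ`. Let `x₀ ∈ (0,1)` be the root of `xπ + 2 arcsin x = π/2`. Then for every real
`α ∈ [-x₀, 0]` and every `λ` with `|λ| ≤ 1`, the map `Φ_λ = H + λG` has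
`Re Φ_λ' > 0` on `𝔻`, and consequently `Φ_λ` is injective on `𝔻`. -/
theorem stmt8
    (h g ω φ ℓ φα H G : ℂ → ℂ) (α : ℝ) (x₀ : ℝ)
    (hhd : DifferentiableOn ℂ h (Metric.ball 0 1))
    (hgd : DifferentiableOn ℂ g (Metric.ball 0 1))
    (hωd : DifferentiableOn ℂ ω (Metric.ball 0 1))
    (hh0 : h 0 = 0) (hg0 : g 0 = 0) (hhp0 : deriv h 0 = 1) (hgp0 : deriv g 0 = 0)
    (hsp : ∀ z ∈ Metric.ball (0:ℂ) 1, ‖deriv g z‖ < ‖deriv h z‖)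
    (hdil : ∀ z ∈ Metric.ball (0:ℂ) 1, deriv g z = ω z * deriv h z)
    (hshear : ∀ z ∈ Metric.ball (0:ℂ) 1, h z - g z = φ z)
    (hφd : DifferentiableOn ℂ φ (Metric.ball 0 1))
    (hφinj : Set.InjOn φ (Metric.ball 0 1))
    (hφ0 : φ 0 = 0) (hφp0 : deriv φ 0 = 1)
    -- φ is convex
    (hconv : Convex ℝ ((fun z => φ z) '' Metric.ball 0 1))
    (hℓd : DifferentiableOn ℂ ℓ (Metric.ball 0 1)) (hℓ0 : ℓ 0 = 0)
    (hℓ : ∀ z ∈ Metric.ball (0:ℂ) 1, φ z = z * Complex.exp (ℓ z))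
    (hφα0 : φα 0 = 0)
    (hφα : ∀ z ∈ Metric.ball (0:ℂ) 1, HasDerivAt φα (Complex.exp ((α : ℂ) * ℓ z)) z)
    (hHd : DifferentiableOn ℂ H (Metric.ball 0 1))
    (hGd : DifferentiableOn ℂ G (Metric.ball 0 1))
    (hH0 : H 0 = 0) (hG0 : G 0 = 0)
    (hHG : ∀ z ∈ Metric.ball (0:ℂ) 1, H z - G z = φα z)
    (hGdil : ∀ z ∈ Metric.ball (0:ℂ) 1, deriv G z = (α : ℂ) * ω z * deriv H z)
    -- x₀ : the unique positive root of xπ + 2 arcsin x = π/2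
    (hx₀mem : x₀ ∈ Set.Ioo (0:ℝ) 1)
    (hx₀root : x₀ * Real.pi + 2 * Real.arcsin x₀ = Real.pi / 2)
    (hx₀unique : ∀ x : ℝ, 0 < x → x * Real.pi + 2 * Real.arcsin x = Real.pi / 2 → x = x₀)
    (hα : -x₀ ≤ α) (hα0 : α ≤ 0) :
    ∀ lam : ℂ, ‖lam‖ ≤ 1 →
      (∀ z ∈ Metric.ball (0:ℂ) 1, 0 < (deriv (fun w => H w + lam * G w) z).re) ∧
      Set.InjOn (fun w => H w + lam * G w) (Metric.ball 0 1) := by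
  intro lam hlam
  have hπ := Real.pi_pos
  obtain ⟨hx₀pos, hx₀lt1⟩ := hx₀mem
  have habsα : |α| ≤ x₀ := abs_le.mpr ⟨hα, by linarith⟩
  -- |Im ℓ z| ≤ π/2 on the ball
  have hcore := core φ hφd hφinj hφ0 hφp0 hconv
  have hcos : ∀ z ∈ Metric.ball (0:ℂ) 1, 0 ≤ Real.cos ((ℓ z).im) := by
    intro z hz
    have hexp : 0 ≤ (Complex.exp (ℓ z)).re := by
      rcases eq_or_ne z 0 with rfl | hzne
      · rw [hℓ0]; simp
      · have h1 : Complex.exp (ℓ z) = φ z / z := by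
          rw [hℓ z hz]
          field_simp
        have h2 := hcore z hz
        have hmr : ((starRingEnd ℂ) z * φ z).re = z.re * (φ z).re + z.im * (φ z).im := by
          simp only [Complex.mul_re, Complex.conj_re, Complex.conj_im]
          ring
        rw [h1, Complex.div_re]
        rw [hmr] at h2
        have hns : (0:ℝ) ≤ Complex.normSq z := Complex.normSq_nonneg z
        have : (φ z).re * z.re / Complex.normSq z + (φ z).im * z.im / Complex.normSq z
            = (z.re * (φ z).re + z.im * (φ z).im) / Complex.normSq z := by ring
        rw [this]
        exact div_nonneg h2 hns
    rw [Complex.exp_re] at hexp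
    nlinarith [Real.exp_pos (ℓ z).re]
  have hIm : ∀ z ∈ Metric.ball (0:ℂ) 1, |(ℓ z).im| ≤ Real.pi / 2 := by
    intro z hz
    by_contra hgt
    push_neg at hgt
    set K := (fun z => (ℓ z).im) '' Metric.ball (0:ℂ) 1 with hK
    have hKconn : IsPreconnected K :=
      ((convex_ball (0:ℂ) 1).isPreconnected).image _
        (Complex.continuous_im.comp_continuousOn hℓd.continuousOn)
    have h0K : (0:ℝ) ∈ K := ⟨0, by simp, by simp [hℓ0]⟩
    have hyK : (ℓ z).im ∈ K := ⟨z, hz, rfl⟩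
    have hcosK : ∀ y ∈ K, 0 ≤ Real.cos y := by
      rintro y ⟨x, hx, rfl⟩
      exact hcos x hx
    have hπ2lt2 : Real.pi / 2 < 2 := by nlinarith [Real.pi_lt_d2]
    rcases lt_or_ge ((ℓ z).im) 0 with hneg | hposs
    · have hy : (ℓ z).im < -(Real.pi / 2) := by
        rw [_root_.abs_of_neg hneg] at hgt
        linarith
      have hsub := hKconn.Icc_subset hyK h0K
      have htmem : max ((ℓ z).im) (-2) ∈ Icc ((ℓ z).im) (0:ℝ) :=
        ⟨le_max_left _ _, max_le (by linarith) (by norm_num)⟩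
      have htK := hsub htmem
      have hclt : Real.cos (max ((ℓ z).im) (-2)) < 0 := by
        rw [← Real.cos_neg]
        apply Real.cos_neg_of_pi_div_two_lt_of_lt
        · have : -(max ((ℓ z).im) (-2)) = min (-(ℓ z).im) 2 := by
            rw [← min_neg_neg]; norm_num
          rw [this]
          exact lt_min (by linarith) hπ2lt2
        · have h1 : -(max ((ℓ z).im) (-2)) ≤ 2 := by
            have := le_max_right ((ℓ z).im) (-2)
            linarith
          nlinarith [Real.pi_gt_three]
      exact absurd (hcosK _ htK) (not_le.mpr hclt)
    · have hy : Real.pi / 2 < (ℓ z).im := by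
        rw [_root_.abs_of_nonneg hposs] at hgt
        linarith
      have hsub := hKconn.Icc_subset h0K hyK
      have htmem : min ((ℓ z).im) 2 ∈ Icc (0:ℝ) ((ℓ z).im) :=
        ⟨le_min (by linarith) (by norm_num), min_le_left _ _⟩
      have htK := hsub htmem
      have hclt : Real.cos (min ((ℓ z).im) 2) < 0 := by
        apply Real.cos_neg_of_pi_div_two_lt_of_lt
        · exact lt_min hy hπ2lt2
        · have h1 : min ((ℓ z).im) 2 ≤ 2 := min_le_right _ _
          nlinarith [Real.pi_gt_three]
      exact absurd (hcosK _ htK) (not_le.mpr hclt)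
  -- pointwise derivative analysis
  have hkey : ∀ z ∈ Metric.ball (0:ℂ) 1,
      HasDerivAt (fun w => H w + lam * G w) (deriv H z + lam * deriv G z) z ∧
      0 < (deriv H z + lam * deriv G z).re := by
    intro z hz
    have hHz : DifferentiableAt ℂ H z := hHd.differentiableAt (isOpen_ball.mem_nhds hz)
    have hGz : DifferentiableAt ℂ G z := hGd.differentiableAt (isOpen_ball.mem_nhds hz)
    have hDD : HasDerivAt (fun w => H w + lam * G w) (deriv H z + lam * deriv G z) z :=
      hHz.hasDerivAt.add (hGz.hasDerivAt.const_mul lam)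
    refine ⟨hDD, ?_⟩
    have hhne : deriv h z ≠ 0 := by
      intro h0
      have hs := hsp z hz
      rw [h0] at hs
      simp only [norm_zero] at hs
      exact (not_le.mpr hs) (norm_nonneg _)
    have hω1 : ‖ω z‖ < 1 := by
      have hs := hsp z hz
      rw [hdil z hz, norm_mul] at hs
      exact (mul_lt_iff_lt_one_left (norm_pos_iff.mpr hhne)).mp hs
    set a : ℂ := (α:ℂ) * ω z with ha
    have haa : ‖a‖ ≤ x₀ := by
      rw [ha, norm_mul, Complex.norm_real, Real.norm_eq_abs]
      calc |α| * ‖ω z‖ ≤ x₀ * 1 :=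
            mul_le_mul habsα hω1.le (norm_nonneg _) (by linarith)
        _ = x₀ := mul_one x₀
    have h1a : (1:ℂ) - a ≠ 0 := by
      intro h0
      have he : a = 1 := by linear_combination -h0
      rw [he] at haa
      simp at haa
      linarith
    -- derivative identities
    have hHG' : HasDerivAt (fun w => H w - G w) (deriv H z - deriv G z) z :=
      hHz.hasDerivAt.sub hGz.hasDerivAt
    have hφα' : HasDerivAt (fun w => H w - G w) (Complex.exp ((α:ℂ) * ℓ z)) z := by
      refine (hφα z hz).congr_of_eventuallyEq ?_
      filter_upwards [isOpen_ball.mem_nhds hz] with w hw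
      exact hHG w hw
    have huniq : deriv H z - deriv G z = Complex.exp ((α:ℂ) * ℓ z) := hHG'.unique hφα'
    have hGder : deriv G z = a * deriv H z := hGdil z hz
    have hHder : deriv H z * (1 - a) = Complex.exp ((α:ℂ) * ℓ z) := by
      rw [← huniq, hGder]; ring
    have hHval : deriv H z = Complex.exp ((α:ℂ) * ℓ z) / (1 - a) := by
      rw [eq_div_iff h1a]; exact hHder
    have hPi : deriv H z + lam * deriv G z
        = Complex.exp ((α:ℂ) * ℓ z) * (1 + lam * a) * (1 - a)⁻¹ := by
      rw [hGder, hHval]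
      field_simp
    rw [hPi]
    -- positivity via argument bounds
    have hAne : Complex.exp ((α:ℂ) * ℓ z) ≠ 0 := Complex.exp_ne_zero _
    have hyim : ((α:ℂ) * ℓ z).im = α * (ℓ z).im := by
      simp [Complex.mul_im]
    have hyb : |α * (ℓ z).im| ≤ x₀ * (Real.pi / 2) := by
      rw [abs_mul]
      exact mul_le_mul habsα (hIm z hz) (abs_nonneg _) (by linarith)
    have hargA : Complex.arg (Complex.exp ((α:ℂ) * ℓ z)) = α * (ℓ z).im := by
      rw [arg_exp' _ (by rw [hyim]; nlinarith [hyb]), hyim]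
    have hBu : ‖lam * a‖ ≤ x₀ := by
      rw [norm_mul]
      calc ‖lam‖ * ‖a‖ ≤ 1 * x₀ :=
            mul_le_mul hlam haa (norm_nonneg _) zero_le_one
        _ = x₀ := one_mul x₀
    have hB := arg_one_add (le_of_lt hx₀pos) hx₀lt1 hBu
    have hCu : ‖-a‖ ≤ x₀ := by rwa [norm_neg]
    have hC := arg_one_add (le_of_lt hx₀pos) hx₀lt1 hCu
    have hCdef : (1:ℂ) - a = 1 + (-a) := by ring
    have hBne : (1:ℂ) + lam * a ≠ 0 := by
      intro h0
      rw [h0] at hB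
      simp at hB
    have harcnn : 0 ≤ Real.arcsin x₀ := Real.arcsin_nonneg.mpr (le_of_lt hx₀pos)
    have harcle : Real.arcsin x₀ ≤ Real.pi / 2 := Real.arcsin_le_pi_div_two x₀
    have hκ : x₀ * (Real.pi / 2) + 2 * Real.arcsin x₀ < Real.pi / 2 := by
      nlinarith [hx₀root]
    have hargB : |Complex.arg ((1:ℂ) + lam * a)| ≤ Real.arcsin x₀ := hB.1
    have hargC : |Complex.arg ((1:ℂ) - a)| ≤ Real.arcsin x₀ := by rw [hCdef]; exact hC.1
    have hargCinv : Complex.arg ((1:ℂ) - a)⁻¹ = -Complex.arg ((1:ℂ) - a) := by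
      rw [Complex.arg_inv, if_neg]
      intro hcc
      rw [hcc] at hargC
      rw [abs_of_pos hπ] at hargC
      linarith
    have hsum1 : |α * (ℓ z).im + Complex.arg ((1:ℂ) + lam * a)|
        ≤ x₀ * (Real.pi / 2) + Real.arcsin x₀ := (abs_add_le _ _).trans (add_le_add hyb hargB)
    have hsum1' : x₀ * (Real.pi / 2) + Real.arcsin x₀ < Real.pi / 2 := by
      linarith [hκ, harcnn]
    have hargAB : Complex.arg (Complex.exp ((α:ℂ) * ℓ z) * ((1:ℂ) + lam * a))
        = α * (ℓ z).im + Complex.arg ((1:ℂ) + lam * a) := by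
      rw [← hargA]
      apply Complex.arg_mul hAne hBne
      rw [hargA, Set.mem_Ioc]
      rcases abs_le.mp hsum1 with ⟨hh1, hh2⟩
      exact ⟨by linarith, by linarith⟩
    have hABne : Complex.exp ((α:ℂ) * ℓ z) * ((1:ℂ) + lam * a) ≠ 0 := mul_ne_zero hAne hBne
    have hCinvne : ((1:ℂ) - a)⁻¹ ≠ 0 := inv_ne_zero h1a
    have hsum2 : |α * (ℓ z).im + Complex.arg ((1:ℂ) + lam * a) + -Complex.arg ((1:ℂ) - a)|
        ≤ x₀ * (Real.pi / 2) + Real.arcsin x₀ + Real.arcsin x₀ := by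
      refine (abs_add_le _ _).trans (add_le_add hsum1 ?_)
      rwa [abs_neg]
    have hsum2' : x₀ * (Real.pi / 2) + Real.arcsin x₀ + Real.arcsin x₀ < Real.pi / 2 := by
      linarith [hκ]
    have hargPi : Complex.arg (Complex.exp ((α:ℂ) * ℓ z) * ((1:ℂ) + lam * a) * ((1:ℂ) - a)⁻¹)
        = α * (ℓ z).im + Complex.arg ((1:ℂ) + lam * a) + -Complex.arg ((1:ℂ) - a) := by
      rw [← hargCinv, ← hargAB]
      apply Complex.arg_mul hABne hCinvne
      rw [hargAB, hargCinv, Set.mem_Ioc]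
      rcases abs_le.mp hsum2 with ⟨hh1, hh2⟩
      exact ⟨by linarith, by linarith⟩
    have habsarg : |Complex.arg (Complex.exp ((α:ℂ) * ℓ z) * ((1:ℂ) + lam * a)
        * ((1:ℂ) - a)⁻¹)| < Real.pi / 2 := by
      rw [hargPi]
      exact lt_of_le_of_lt hsum2 hsum2'
    rcases Complex.abs_arg_lt_pi_div_two_iff.mp habsarg with hp | h0
    · exact hp
    · exact absurd h0 (mul_ne_zero hABne hCinvne)
  constructor
  · intro z hz
    have hdv := (hkey z hz).1.deriv
    rw [hdv]
    exact (hkey z hz).2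
  · exact njw _ _ (fun z hz => (hkey z hz).1) (fun z hz => (hkey z hz).2)
end

section
/- Let f = h + conj(g) be a sense-preserving harmonic mapping on 𝔻 with dilatation ω, let α be real with |α| ≤ 1, and let f_α = H + conj(G) be the associated harmonic mapping with dilatation ω_α = αω. Then the harmonic pre-Schwarzian derivative of f_α, defined as P_{f_α} = H''/H' − conj(ω_α)·ω_α'/(1 − |ω_α|²), satisfies for all z ∈ 𝔻: P_{f_α}(z) = α·[ φ''(z)/φ'(z) + ω'(z)·(1 − α·conj(ω(z))) / ((1 − αω(z))(1 − α²|ω(z)|²)) ]. -/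
/-- For `f_α = H + conj G` with dilatation `ω_α = αω`, `|α| ≤ 1`, the
harmonic pre-Schwarzian `P_{f_α} = H''/H' - conj(ω_α)ω_α'/(1 - |ω_α|²)` equals
`α[φ''/φ' + ω'(1 - α conj ω)/((1 - αω)(1 - α²|ω|²))]` on `𝔻`, where `φ = h - g`. -/
theorem stmt10
    (h g ω φ L φα H G : ℂ → ℂ) (α : ℝ)
    (hhd : DifferentiableOn ℂ h (Metric.ball 0 1))
    (hgd : DifferentiableOn ℂ g (Metric.ball 0 1))
    (hωd : DifferentiableOn ℂ ω (Metric.ball 0 1))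
    (hh0 : h 0 = 0) (hg0 : g 0 = 0) (hhp0 : deriv h 0 = 1) (hgp0 : deriv g 0 = 0)
    (hsp : ∀ z ∈ Metric.ball (0:ℂ) 1, ‖deriv g z‖ < ‖deriv h z‖)
    (hdil : ∀ z ∈ Metric.ball (0:ℂ) 1, deriv g z = ω z * deriv h z)
    (hφ : ∀ z ∈ Metric.ball (0:ℂ) 1, φ z = h z - g z)
    (hLd : DifferentiableOn ℂ L (Metric.ball 0 1)) (hL0 : L 0 = 0)
    (hL : ∀ z ∈ Metric.ball (0:ℂ) 1, Complex.exp (L z) = deriv φ z)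
    (hφα0 : φα 0 = 0)
    (hφα : ∀ z ∈ Metric.ball (0:ℂ) 1, HasDerivAt φα (Complex.exp ((α : ℂ) * L z)) z)
    (hHd : DifferentiableOn ℂ H (Metric.ball 0 1))
    (hGd : DifferentiableOn ℂ G (Metric.ball 0 1))
    (hH0 : H 0 = 0) (hG0 : G 0 = 0)
    (hHG : ∀ z ∈ Metric.ball (0:ℂ) 1, H z - G z = φα z)
    (hGdil : ∀ z ∈ Metric.ball (0:ℂ) 1, deriv G z = (α : ℂ) * ω z * deriv H z)
    (hα : |α| ≤ 1) :
    ∀ z ∈ Metric.ball (0:ℂ) 1,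
      deriv (deriv H) z / deriv H z -
          (starRingEnd ℂ) ((α : ℂ) * ω z) * ((α : ℂ) * deriv ω z) /
            (1 - (‖(α : ℂ) * ω z‖ : ℂ) ^ 2) =
        (α : ℂ) * (deriv (deriv φ) z / deriv φ z +
          deriv ω z * (1 - (α : ℂ) * (starRingEnd ℂ) (ω z)) /
            ((1 - (α : ℂ) * ω z) *
              (1 - (α : ℂ) ^ 2 * (‖ω z‖ : ℂ) ^ 2))) := by
  have hob : IsOpen (Metric.ball (0:ℂ) 1) := Metric.isOpen_ball
  -- |ω| < 1 on the ball
  have habsω : ∀ y ∈ Metric.ball (0:ℂ) 1, ‖ω y‖ < 1 := by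
    intro y hy
    have h1 := hsp y hy
    have hh : 0 < ‖deriv h y‖ :=
      lt_of_le_of_lt (norm_nonneg _) h1
    rw [hdil y hy, norm_mul] at h1
    exact (mul_lt_iff_lt_one_left hh).mp h1
  -- 1 - αω ≠ 0 on the ball
  have hden1 : ∀ y ∈ Metric.ball (0:ℂ) 1, (1:ℂ) - (α : ℂ) * ω y ≠ 0 := by
    intro y hy h0
    have habs : ‖(α : ℂ) * ω y‖ < 1 := by
      rw [norm_mul, Complex.norm_real, Real.norm_eq_abs]
      nlinarith [norm_nonneg (ω y), habsω y hy, abs_nonneg α]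
    rw [sub_eq_zero] at h0
    rw [← h0] at habs
    simp at habs
  -- deriv H formula on the ball
  have hHderiv : ∀ y ∈ Metric.ball (0:ℂ) 1,
      deriv H y = Complex.exp ((α : ℂ) * L y) / (1 - (α : ℂ) * ω y) := by
    intro y hy
    have hHy : DifferentiableAt ℂ H y := hHd.differentiableAt (hob.mem_nhds hy)
    have hGy : DifferentiableAt ℂ G y := hGd.differentiableAt (hob.mem_nhds hy)
    have heq : (fun t => H t - G t) =ᶠ[nhds y] φα :=
      Filter.eventuallyEq_of_mem (hob.mem_nhds hy) hHG
    have h2 : deriv H y - deriv G y = Complex.exp ((α : ℂ) * L y) := by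
      rw [← deriv_fun_sub hHy hGy, heq.deriv_eq, (hφα y hy).deriv]
    rw [hGdil y hy] at h2
    rw [eq_div_iff (hden1 y hy)]
    linear_combination h2
  -- deriv φ formula on the ball
  have hφderiv : ∀ y ∈ Metric.ball (0:ℂ) 1, deriv φ y = Complex.exp (L y) := by
    intro y hy; exact (hL y hy).symm
  intro z hz
  have hnz : Metric.ball (0:ℂ) 1 ∈ nhds z := hob.mem_nhds hz
  have hL' : HasDerivAt L (deriv L z) z := (hLd.differentiableAt hnz).hasDerivAt
  have hω' : HasDerivAt ω (deriv ω z) z := (hωd.differentiableAt hnz).hasDerivAt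
  -- second derivative of φ
  have hφ'' : deriv (deriv φ) z = Complex.exp (L z) * deriv L z := by
    have heq : deriv φ =ᶠ[nhds z] fun y => Complex.exp (L y) :=
      Filter.eventuallyEq_of_mem hnz hφderiv
    rw [heq.deriv_eq, hL'.cexp.deriv]
  -- second derivative of H
  have hnum : HasDerivAt (fun y => Complex.exp ((α : ℂ) * L y))
      (Complex.exp ((α : ℂ) * L z) * ((α : ℂ) * deriv L z)) z :=
    (hL'.const_mul ((α : ℂ))).cexp
  have hdenf : HasDerivAt (fun y => (1:ℂ) - (α : ℂ) * ω y)
      (-((α : ℂ) * deriv ω z)) z :=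
    (hω'.const_mul ((α : ℂ))).const_sub 1
  have hF := hnum.div hdenf (hden1 z hz)
  have hH'' : deriv (deriv H) z =
      (Complex.exp ((α : ℂ) * L z) * ((α : ℂ) * deriv L z) * (1 - (α : ℂ) * ω z) -
        Complex.exp ((α : ℂ) * L z) * (-((α : ℂ) * deriv ω z))) /
        (1 - (α : ℂ) * ω z) ^ 2 := by
    have heq : deriv H =ᶠ[nhds z]
        fun y => Complex.exp ((α : ℂ) * L y) / (1 - (α : ℂ) * ω y) :=
      Filter.eventuallyEq_of_mem hnz hHderiv
    rw [heq.deriv_eq]; exact hF.deriv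
  -- rewrite the absolute values and conjugates
  have habs2 : ((‖(α : ℂ) * ω z‖ : ℝ) : ℂ) ^ 2 =
      (α : ℂ) ^ 2 * ((‖ω z‖ : ℝ) : ℂ) ^ 2 := by
    rw [norm_mul, Complex.norm_real, Real.norm_eq_abs]
    push_cast
    rw [mul_pow]
    congr 1
    norm_cast
    exact sq_abs α
  have hconj : (starRingEnd ℂ) ((α : ℂ) * ω z) = (α : ℂ) * (starRingEnd ℂ) (ω z) := by
    rw [map_mul, Complex.conj_ofReal]
  -- nonvanishing denominators
  have hden2 : (1:ℂ) - (α : ℂ) ^ 2 * ((‖ω z‖ : ℝ) : ℂ) ^ 2 ≠ 0 := by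
    have hr : (1:ℂ) - (α : ℂ) ^ 2 * ((‖ω z‖ : ℝ) : ℂ) ^ 2 =
        ((1 - α ^ 2 * (‖ω z‖) ^ 2 : ℝ) : ℂ) := by push_cast; ring
    rw [hr]
    norm_cast
    have h1 : α ^ 2 ≤ 1 := by nlinarith [abs_nonneg α, sq_abs α]
    nlinarith [norm_nonneg (ω z), habsω z hz, sq_nonneg α]
  have hexp1 : Complex.exp ((α : ℂ) * L z) ≠ 0 := Complex.exp_ne_zero _
  have hexp2 : Complex.exp (L z) ≠ 0 := Complex.exp_ne_zero _
  have hd1 := hden1 z hz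
  have hmod : ((‖ω z‖ : ℝ) : ℂ) ^ 2 = ω z * (starRingEnd ℂ) (ω z) := by
    rw [Complex.mul_conj]
    norm_cast
    exact Complex.sq_norm _
  rw [hmod] at hden2
  have hden2' : (1:ℂ) - (α : ℂ) ^ 2 * ω z * (starRingEnd ℂ) (ω z) ≠ 0 := by rwa [mul_assoc]
  rw [hH'', hHderiv z hz, hφ'', hφderiv z hz, habs2, hconj, hmod]
  field_simp
  ring
end

section
/- Let φ be holomorphic and injective on 𝔻 and suppose Ω = φ(𝔻) is m-linearly connected, i.e. there is m < ∞ such that any two points w₁, w₂ ∈ Ω can be joined by a rectifiable path γ ⊂ Ω of length ℓ(γ) ≤ m|w₁ − w₂|. Let f = h + conj(g) be a sense-preserving harmonic mapping on 𝔻 with dilatation ω such that h − g = φ. If ‖ω‖ < 1/(2m + 1), then f is injective on 𝔻. -/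
open Set Metric Filter Function

lemma key_chain {Ω : Set ℂ} (hΩ : IsOpen Ω) {G G' : ℂ → ℂ} {L : ℝ}
    (hG : ∀ w ∈ Ω, HasDerivAt G (G' w) w) (hbd : ∀ w ∈ Ω, ‖G' w‖ ≤ L)
    {γ : ℝ → ℂ} (hγ : ContinuousOn γ (Set.Icc 0 1)) (hmem : ∀ t ∈ Set.Icc (0:ℝ) 1, γ t ∈ Ω)
    {V : ℝ} (hV0 : 0 ≤ V) (hV : eVariationOn γ (Set.Icc 0 1) ≤ ENNReal.ofReal V) :
    ‖G (γ 1) - G (γ 0)‖ ≤ L * V := by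
  have hL0 : 0 ≤ L := le_trans (norm_nonneg _) (hbd _ (hmem 0 (by norm_num)))
  -- compact image, uniform radius
  have hK : IsCompact (γ '' Set.Icc 0 1) := (isCompact_Icc).image_of_continuousOn hγ
  have hKΩ : γ '' Set.Icc 0 1 ⊆ Ω := by rintro w ⟨t, ht, rfl⟩; exact hmem t ht
  obtain ⟨r, hr0, hrΩ⟩ := hK.exists_thickening_subset_open hΩ hKΩ
  have hball : ∀ t ∈ Set.Icc (0:ℝ) 1, Metric.ball (γ t) r ⊆ Ω := fun t ht =>
    (Metric.ball_subset_thickening (Set.mem_image_of_mem _ ht) r).trans hrΩ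
  -- Lipschitz estimate on each small ball
  have hlip : ∀ t ∈ Set.Icc (0:ℝ) 1, ∀ a ∈ Metric.ball (γ t) r, ∀ b ∈ Metric.ball (γ t) r,
      ‖G b - G a‖ ≤ L * ‖b - a‖ := by
    intro t ht a ha b hb
    refine Convex.norm_image_sub_le_of_norm_hasFDerivWithin_le
      (f' := fun w => ContinuousLinearMap.smulRight (1 : ℂ →L[ℂ] ℂ) (G' w))
      (fun w hw => ((hG w (hball t ht hw)).hasFDerivAt).hasFDerivWithinAt) ?_
      (convex_ball _ _) ha hb
    intro w hw
    rw [ContinuousLinearMap.norm_smulRight_apply, ContinuousLinearMap.one_def,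
      ContinuousLinearMap.norm_id, one_mul]
    exact hbd w (hball t ht hw)
  -- uniform continuity
  have huc : UniformContinuousOn γ (Set.Icc 0 1) :=
    isCompact_Icc.uniformContinuousOn_of_continuous hγ
  obtain ⟨δ, hδ0, hδ⟩ := (Metric.uniformContinuousOn_iff).1 huc r hr0
  obtain ⟨n, hn⟩ := exists_nat_one_div_lt hδ0
  set u : ℕ → ℝ := fun i => min ((i : ℝ) / (n + 1)) 1 with hu_def
  have hn1 : (0:ℝ) < (n:ℝ) + 1 := by positivity
  have humono : Monotone u := fun i j hij => by
    exact min_le_min (by gcongr <;> exact_mod_cast hij) le_rfl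
  have humem : ∀ i, u i ∈ Set.Icc (0:ℝ) 1 := fun i =>
    ⟨le_min (by positivity) zero_le_one, min_le_right _ _⟩
  have hu0 : u 0 = 0 := by simp [hu_def]
  have hulast : u (n + 1) = 1 := by
    have : ((n:ℝ) + 1) / ((n:ℝ) + 1) = 1 := div_self (ne_of_gt hn1)
    simp [hu_def, this]
  have hustep : ∀ i, u (i + 1) - u i ≤ 1 / ((n:ℝ) + 1) := by
    intro i
    have h1 : u (i + 1) ≤ u i + 1 / ((n:ℝ) + 1) := by
      have : ((i:ℝ) + 1) / ((n:ℝ) + 1) = (i:ℝ) / ((n:ℝ)+1) + 1 / ((n:ℝ)+1) := by ring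
      calc u (i+1) = min ((i:ℝ)/((n:ℝ)+1) + 1/((n:ℝ)+1)) 1 := by
            simp only [hu_def]; push_cast; rw [this]
        _ ≤ min ((i:ℝ)/((n:ℝ)+1) + 1/((n:ℝ)+1)) (1 + 1/((n:ℝ)+1)) :=
            min_le_min le_rfl (le_add_of_nonneg_right (by positivity))
        _ = u i + 1/((n:ℝ)+1) := by rw [hu_def, min_add_add_right]
    linarith
  -- distances along the partition
  have hdist : ∀ i, dist (γ (u (i+1))) (γ (u i)) < r := by
    intro i
    refine hδ _ (humem _) _ (humem _) ?_
    rw [Real.dist_eq, abs_of_nonneg (sub_nonneg.2 (humono (Nat.le_succ i)))]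
    exact lt_of_le_of_lt (hustep i) hn
  -- telescoping
  have htel : G (γ (u (n+1))) - G (γ (u 0)) =
      ∑ i ∈ Finset.range (n+1), (G (γ (u (i+1))) - G (γ (u i))) :=
    (Finset.sum_range_sub (fun i => G (γ (u i))) (n+1)).symm
  have hsumdist : ∑ i ∈ Finset.range (n+1), dist (γ (u (i+1))) (γ (u i)) ≤ V := by
    have h1 : ENNReal.ofReal (∑ i ∈ Finset.range (n+1), dist (γ (u (i+1))) (γ (u i)))
        ≤ ENNReal.ofReal V := by
      rw [ENNReal.ofReal_sum_of_nonneg (fun i _ => dist_nonneg)]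
      calc ∑ i ∈ Finset.range (n+1), ENNReal.ofReal (dist (γ (u (i+1))) (γ (u i)))
          = ∑ i ∈ Finset.range (n+1), edist (γ (u (i+1))) (γ (u i)) := by
            simp [edist_dist]
        _ ≤ eVariationOn γ (Set.Icc 0 1) := eVariationOn.sum_le (f := γ) (n := n+1) humono humem
        _ ≤ ENNReal.ofReal V := hV
    exact (ENNReal.ofReal_le_ofReal_iff hV0).1 h1
  calc ‖G (γ 1) - G (γ 0)‖ = ‖∑ i ∈ Finset.range (n+1), (G (γ (u (i+1))) - G (γ (u i)))‖ := by
        rw [← htel, hu0, hulast]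
    _ ≤ ∑ i ∈ Finset.range (n+1), ‖G (γ (u (i+1))) - G (γ (u i))‖ := norm_sum_le _ _
    _ ≤ ∑ i ∈ Finset.range (n+1), L * dist (γ (u (i+1))) (γ (u i)) := by
        refine Finset.sum_le_sum fun i _ => ?_
        have hmem1 : γ (u i) ∈ Metric.ball (γ (u i)) r := Metric.mem_ball_self hr0
        have hmem2 : γ (u (i+1)) ∈ Metric.ball (γ (u i)) r := by
          rw [Metric.mem_ball]; exact hdist i
        simpa [dist_eq_norm, norm_sub_rev] using
          hlip (u i) (humem i) (γ (u i)) hmem1 (γ (u (i+1))) hmem2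
    _ = L * ∑ i ∈ Finset.range (n+1), dist (γ (u (i+1))) (γ (u i)) := by
        rw [Finset.mul_sum]
    _ ≤ L * V := by exact mul_le_mul_of_nonneg_left hsumdist hL0



/-- If `φ` is univalent holomorphic on `𝔻` with `Ω = φ(𝔻)` an
`m`-linearly connected domain (any two points joined inside `Ω` by a rectifiable path of
length at most `m` times their distance), and `f = h + conj g` is a sense-preserving
harmonic map with `h - g = φ` and `‖ω‖ < 1/(2m+1)`, then `f` is injective on `𝔻`. -/
theorem stmt11
    (h g ω φ : ℂ → ℂ) (m Nw : ℝ)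
    (hφd : DifferentiableOn ℂ φ (Metric.ball 0 1))
    (hφinj : Set.InjOn φ (Metric.ball 0 1))
    -- Ω = φ(𝔻) is m-linearly connected
    (hlc : ∀ w₁ ∈ φ '' Metric.ball (0:ℂ) 1, ∀ w₂ ∈ φ '' Metric.ball (0:ℂ) 1,
      ∃ γ : ℝ → ℂ, ContinuousOn γ (Set.Icc 0 1) ∧ γ 0 = w₁ ∧ γ 1 = w₂ ∧
        (∀ t ∈ Set.Icc (0:ℝ) 1, γ t ∈ φ '' Metric.ball (0:ℂ) 1) ∧
        eVariationOn γ (Set.Icc 0 1) ≤ ENNReal.ofReal (m * ‖w₁ - w₂‖))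
    (hhd : DifferentiableOn ℂ h (Metric.ball 0 1))
    (hgd : DifferentiableOn ℂ g (Metric.ball 0 1))
    (hsp : ∀ z ∈ Metric.ball (0:ℂ) 1, ‖deriv g z‖ < ‖deriv h z‖)
    (hdil : ∀ z ∈ Metric.ball (0:ℂ) 1, deriv g z = ω z * deriv h z)
    (hshear : ∀ z ∈ Metric.ball (0:ℂ) 1, h z - g z = φ z)
    (hNw : Nw = sSup ((fun z => ‖ω z‖) '' Metric.ball 0 1))
    (hsmall : Nw < 1 / (2 * m + 1)) :
    Set.InjOn (fun z => h z + (starRingEnd ℂ) (g z)) (Metric.ball 0 1) := by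
  intro z₁ hz₁ z₂ hz₂ hfeq
  simp only at hfeq
  have hBo : IsOpen (Metric.ball (0:ℂ) 1) := Metric.isOpen_ball
  have hhat : ∀ z ∈ Metric.ball (0:ℂ) 1, DifferentiableAt ℂ h z :=
    fun z hz => (hhd z hz).differentiableAt (hBo.mem_nhds hz)
  have hgat : ∀ z ∈ Metric.ball (0:ℂ) 1, DifferentiableAt ℂ g z :=
    fun z hz => (hgd z hz).differentiableAt (hBo.mem_nhds hz)
  have hφderiv : ∀ z ∈ Metric.ball (0:ℂ) 1, deriv φ z = deriv h z - deriv g z := by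
    intro z hz
    have he : φ =ᶠ[nhds z] fun w => h w - g w := by
      filter_upwards [hBo.mem_nhds hz] with w hw
      exact (hshear w hw).symm
    rw [he.deriv_eq, deriv_fun_sub (hhat z hz) (hgat z hz)]
  have hh0 : ∀ z ∈ Metric.ball (0:ℂ) 1, deriv h z ≠ 0 := by
    intro z hz h0
    have h1 := hsp z hz
    rw [h0, norm_zero] at h1
    exact absurd h1 (not_lt.2 (norm_nonneg _))
  have hφ0 : ∀ z ∈ Metric.ball (0:ℂ) 1, deriv φ z ≠ 0 := by
    intro z hz h0
    rw [hφderiv z hz, sub_eq_zero] at h0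
    exact absurd (h0 ▸ hsp z hz) (lt_irrefl _)
  have hω_lt1 : ∀ z ∈ Metric.ball (0:ℂ) 1, ‖ω z‖ < 1 := by
    intro z hz
    have h1 := hsp z hz
    rw [hdil z hz, norm_mul] at h1
    have hh : 0 < ‖deriv h z‖ := norm_pos_iff.mpr (hh0 z hz)
    nlinarith
  have h0B : (0:ℂ) ∈ Metric.ball (0:ℂ) 1 := Metric.mem_ball_self one_pos
  have hbdd : BddAbove ((fun z => ‖ω z‖) '' Metric.ball (0:ℂ) 1) :=
    ⟨1, by rintro x ⟨z, hz, rfl⟩; exact (hω_lt1 z hz).le⟩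
  have hub : ∀ z ∈ Metric.ball (0:ℂ) 1, ‖ω z‖ ≤ Nw :=
    fun z hz => hNw ▸ le_csSup hbdd ⟨z, hz, rfl⟩
  have hNw0 : 0 ≤ Nw := le_trans (norm_nonneg _) (hub 0 h0B)
  have h2m1 : 0 < 2 * m + 1 := by
    by_contra hc
    push_neg at hc
    have : 1 / (2 * m + 1) ≤ 0 := one_div_nonpos.mpr hc
    linarith
  -- key identity
  have hkey : φ z₁ - φ z₂ = (g z₂ - g z₁) + (starRingEnd ℂ) (g z₂ - g z₁) := by
    rw [← hshear z₁ hz₁, ← hshear z₂ hz₂, map_sub]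
    linear_combination hfeq
  have habs : ‖φ z₁ - φ z₂‖ ≤ 2 * ‖g z₂ - g z₁‖ := by
    rw [hkey, Complex.add_conj, Complex.norm_real, Real.norm_eq_abs, abs_mul, abs_two]
    have := Complex.abs_re_le_norm (g z₂ - g z₁)
    linarith
  suffices hww : φ z₁ = φ z₂ from hφinj hz₁ hz₂ hww
  by_contra hne
  have hΔpos : 0 < ‖φ z₁ - φ z₂‖ := norm_pos_iff.mpr (sub_ne_zero.2 hne)
  obtain ⟨γ, hγc, hγ0, hγ1, hγmem, hγvar⟩ :=
    hlc (φ z₁) ⟨z₁, hz₁, rfl⟩ (φ z₂) ⟨z₂, hz₂, rfl⟩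
  by_cases hm : 0 < m
  · -- main case
    have hNw1 : Nw < 1 := hsmall.trans_le ((div_le_one h2m1).mpr (by linarith))
    have h1N : 0 < 1 - Nw := by linarith
    set G : ℂ → ℂ := fun w => g (Function.invFunOn φ (Metric.ball 0 1) w) with hGdef
    set G' : ℂ → ℂ := fun w =>
      deriv g (Function.invFunOn φ (Metric.ball 0 1) w) /
      deriv φ (Function.invFunOn φ (Metric.ball 0 1) w) with hG'def
    have hinv : ∀ z ∈ Metric.ball (0:ℂ) 1, Function.invFunOn φ (Metric.ball 0 1) (φ z) = z :=
      fun z hz => hφinj.leftInvOn_invFunOn hz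
    have hφstrict : ∀ z ∈ Metric.ball (0:ℂ) 1, HasStrictDerivAt φ (deriv φ z) z := by
      intro z hz
      obtain ⟨p, hp⟩ := hφd.analyticAt (hBo.mem_nhds hz)
      have h1 := hp.hasStrictDerivAt
      rwa [← hp.deriv] at h1
    have hΩo : IsOpen (φ '' Metric.ball (0:ℂ) 1) := by
      rw [isOpen_iff_mem_nhds]
      rintro w ⟨z, hz, rfl⟩
      rw [← (hφstrict z hz).map_nhds_eq (hφ0 z hz)]
      exact mem_map.2 (mem_of_superset (hBo.mem_nhds hz) (Set.subset_preimage_image φ _))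
    have hGd : ∀ w ∈ φ '' Metric.ball (0:ℂ) 1, HasDerivAt G (G' w) w := by
      rintro w ⟨z, hz, rfl⟩
      have hs := hφstrict z hz
      have hf0 := hφ0 z hz
      set ψ := hs.localInverse φ (deriv φ z) z hf0 with hψdef
      have hψz : ψ (φ z) = z :=
        (hs.hasStrictFDerivAt_equiv hf0).localInverse_apply_image
      have hψstrict : HasStrictDerivAt ψ (deriv φ z)⁻¹ (φ z) := hs.to_localInverse hf0
      have hre : ∀ᶠ w' in nhds (φ z), φ (ψ w') = w' :=
        (hs.hasStrictFDerivAt_equiv hf0).eventually_right_inverse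
      have hψcont : ContinuousAt ψ (φ z) := hψstrict.hasDerivAt.continuousAt
      have hmem' : ∀ᶠ w' in nhds (φ z), ψ w' ∈ Metric.ball (0:ℂ) 1 := by
        have : Metric.ball (0:ℂ) 1 ∈ nhds (ψ (φ z)) := by rw [hψz]; exact hBo.mem_nhds hz
        exact hψcont.eventually_mem this
      have hEq : (fun w' => g (ψ w')) =ᶠ[nhds (φ z)] G := by
        filter_upwards [hre, hmem'] with w' h1 h2
        have hiψ : Function.invFunOn φ (Metric.ball 0 1) w' = ψ w' := by
          have he1 : φ (Function.invFunOn φ (Metric.ball 0 1) w') = w' :=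
            Function.invFunOn_eq ⟨ψ w', h2, h1⟩
          exact hφinj (Function.invFunOn_mem ⟨ψ w', h2, h1⟩) h2 (by rw [he1, h1])
        simp only [hGdef, hiψ]
      have hgz : HasDerivAt g (deriv g z) (ψ (φ z)) := by
        rw [hψz]; exact (hgat z hz).hasDerivAt
      have hcomp : HasDerivAt (fun w' => g (ψ w')) (deriv g z * (deriv φ z)⁻¹) (φ z) :=
        HasDerivAt.comp (φ z) hgz hψstrict.hasDerivAt
      have hfin : HasDerivAt G (deriv g z * (deriv φ z)⁻¹) (φ z) :=
        hcomp.congr_of_eventuallyEq hEq.symm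
      have hval : G' (φ z) = deriv g z * (deriv φ z)⁻¹ := by
        simp only [hG'def, hinv z hz, div_eq_mul_inv]
      rw [hval]
      exact hfin
    have hGbd : ∀ w ∈ φ '' Metric.ball (0:ℂ) 1, ‖G' w‖ ≤ Nw / (1 - Nw) := by
      rintro w ⟨z, hz, rfl⟩
      simp only [hG'def, hinv z hz, norm_div]
      have hh : 0 ≤ ‖deriv h z‖ := norm_nonneg _
      have hgd' : ‖deriv g z‖ ≤ Nw * ‖deriv h z‖ := by
        rw [hdil z hz, norm_mul]
        exact mul_le_mul_of_nonneg_right (hub z hz) hh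
      have hφlb : (1 - Nw) * ‖deriv h z‖ ≤ ‖deriv φ z‖ := by
        have he : deriv φ z = (1 - ω z) * deriv h z := by
          rw [hφderiv z hz, hdil z hz]; ring
        rw [he, norm_mul]
        have h1 : 1 - ‖ω z‖ ≤ ‖1 - ω z‖ := by
          have := norm_sub_norm_le (1:ℂ) (ω z)
          simpa using this
        have h2 : 1 - Nw ≤ 1 - ‖ω z‖ := by linarith [hub z hz]
        exact mul_le_mul_of_nonneg_right (h2.trans h1) hh
      have hφpos : 0 < ‖deriv φ z‖ := norm_pos_iff.mpr (hφ0 z hz)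
      rw [div_le_div_iff₀ hφpos h1N]
      nlinarith
    have hV0 : 0 ≤ m * ‖φ z₁ - φ z₂‖ :=
      mul_nonneg hm.le (norm_nonneg _)
    have hchain := key_chain hΩo hGd hGbd hγc hγmem hV0 hγvar
    rw [hγ0, hγ1] at hchain
    have hGw1 : G (φ z₁) = g z₁ := by simp only [hGdef, hinv z₁ hz₁]
    have hGw2 : G (φ z₂) = g z₂ := by simp only [hGdef, hinv z₂ hz₂]
    rw [hGw1, hGw2] at hchain
    have habs2 : ‖g z₂ - g z₁‖ ≤
        Nw / (1 - Nw) * (m * ‖φ z₁ - φ z₂‖) := by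
      exact hchain
    have hLN : Nw / (1 - Nw) * (1 - Nw) = Nw := div_mul_cancel₀ _ (ne_of_gt h1N)
    have hNm : Nw * (2 * m + 1) < 1 := (lt_div_iff₀ h2m1).1 hsmall
    nlinarith [mul_le_mul_of_nonneg_left habs2 h1N.le,
      mul_pos hΔpos (mul_pos hm hΔpos)]
  · push_neg at hm
    have h1 : edist (φ z₁) (φ z₂) ≤ ENNReal.ofReal (m * ‖φ z₁ - φ z₂‖) := by
      calc edist (φ z₁) (φ z₂) = edist (γ 0) (γ 1) := by rw [hγ0, hγ1]
        _ ≤ eVariationOn γ (Set.Icc 0 1) :=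
            eVariationOn.edist_le γ ⟨le_rfl, zero_le_one⟩ ⟨zero_le_one, le_rfl⟩
        _ ≤ _ := hγvar
    have hle0 : m * ‖φ z₁ - φ z₂‖ ≤ 0 :=
      mul_nonpos_of_nonpos_of_nonneg hm (norm_nonneg _)
    rw [ENNReal.ofReal_eq_zero.2 hle0] at h1
    have := nonpos_iff_eq_zero.1 h1
    rw [edist_eq_zero] at this
    exact hne this
end
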